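/- arXiv:math/9702213 — 5 statements merged into one kernel-verified Lean document; each statement's English description precedes it below -/
import Mathlib

section
/- Let 1 < p < ∞ and let X be a Banach space admitting a sequence of compact operators (K_n) on X satisfying conditions (a)–(c). If inequality (7) holds for X and p, then every contraction T: X → ℓ_p has property (M). -/
open Filter Topology NormedSpace ENNReal MeasureTheory

noncomputable section

/-- A sequence in `X` is weakly null if it tends to zero in the weak topology,
i.e. `f (xs n) → 0` for every continuous linear functional `f`. -/
def WeaklyNull {X : Type*} [NormedAddCommGroup X] [NormedSpace ℝ X] (xs : ℕ → X) : Prop :=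
  ∀ f : StrongDual ℝ X, Tendsto (fun n => f (xs n)) atTop (𝓝 0)

/-- The annihilator `J^⊥` of a subspace `J` in the continuous dual. -/
def annih {Z : Type*} [NormedAddCommGroup Z] [NormedSpace ℝ Z] (J : Submodule ℝ Z) :
    Submodule ℝ (StrongDual ℝ Z) where
  carrier := {f | ∀ x ∈ J, f x = 0}
  add_mem' := by
    intro f g hf hg x hx
    simp [hf x hx, hg x hx]
  zero_mem' := by intro x hx; rfl
  smul_mem' := by
    intro c f hf x hx
    simp [hf x hx]

/-- `J` is an M-ideal in `Z`: there is a closed subspace `V` of the dual such that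
`Z* = J^⊥ ⊕₁ V` (algebraic direct sum with additive norm). -/
def IsMIdeal {Z : Type*} [NormedAddCommGroup Z] [NormedSpace ℝ Z] (J : Submodule ℝ Z) : Prop :=
  ∃ V : Submodule ℝ (StrongDual ℝ Z), IsClosed (V : Set (StrongDual ℝ Z)) ∧
    (∀ f : StrongDual ℝ Z, ∃ g ∈ annih J, ∃ h ∈ V, f = g + h) ∧
    annih J ⊓ V = ⊥ ∧
    ∀ g ∈ annih J, ∀ h ∈ V, ‖g + h‖ = ‖g‖ + ‖h‖

/-- Conditions (a)–(c) on a sequence of compact operators `K n` on `X`: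
(a) `K n x → x` for all `x`; (b) `(K n)* f → f` in norm for every `f ∈ X*`;
(c) `‖Id − 2 K n‖ → 1`. -/
def ABC {X : Type*} [NormedAddCommGroup X] [NormedSpace ℝ X] (K : ℕ → X →L[ℝ] X) : Prop :=
  (∀ n, IsCompactOperator (K n)) ∧
  (∀ x : X, Tendsto (fun n => (K n) x) atTop (𝓝 x)) ∧
  (∀ f : StrongDual ℝ X, Tendsto (fun n => f.comp (K n)) atTop (𝓝 f)) ∧
  Tendsto (fun n => ‖ContinuousLinearMap.id ℝ X - (2 : ℝ) • K n‖) atTop (𝓝 1)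

/-- Inequality (7) for `X` and exponent `p`. -/
def Ineq7 (X : Type*) [NormedAddCommGroup X] [NormedSpace ℝ X] (p : ℝ) : Prop :=
  ∀ (x : X) (xs : ℕ → X), WeaklyNull xs →
    limsup (fun n => (‖x‖ ^ p + ‖xs n‖ ^ p) ^ (1 / p)) atTop ≤
    limsup (fun n => ((‖x + xs n‖ ^ p + ‖x - xs n‖ ^ p) / 2) ^ (1 / p)) atTop

/-!
Pass to a subsequence along which `‖y + T xₙ‖` tends to its limsup and `‖x + xₙ‖`, `‖x - xₙ‖`,
`‖xₙ‖`, `‖T xₙ‖` converge, to `a`, `b`, `ℓ`, `t`. Compact operators send weakly null sequences to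
norm null ones, so writing `x - xₙ = 2 (x - Kₘ x) - 2 Kₘ xₙ - (Id - 2 Kₘ)(x + xₙ)` and letting
`m → ∞` gives `b ≤ a`. In `ℓ_p` a coordinatewise null sequence splits off in the `p`-norm, so
`lim ‖y + T xₙ‖ ≤ (‖y‖ᵖ + tᵖ)^(1/p) ≤ (‖x‖ᵖ + ℓᵖ)^(1/p)`, and inequality (7) bounds the latter by
`((aᵖ + bᵖ)/2)^(1/p) ≤ a`.
-/

section WeaklyNull

variable {X Y : Type*} [NormedAddCommGroup X] [NormedSpace ℝ X] [NormedAddCommGroup Y]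
  [NormedSpace ℝ Y] {xs : ℕ → X}

theorem WeaklyNull.isBounded_range (hxs : WeaklyNull xs) : Bornology.IsBounded (Set.range xs) := by
  obtain ⟨C, hC⟩ := banach_steinhaus (g := fun n => inclusionInDoubleDual ℝ X (xs n)) fun f =>
    let ⟨C, hC⟩ := (hxs f).norm.bddAbove_range
    ⟨C, fun n => hC ⟨n, rfl⟩⟩
  refine isBounded_iff_forall_norm_le.2 ⟨C, ?_⟩
  rintro _ ⟨n, rfl⟩
  exact ((inclusionInDoubleDualLi ℝ (E := X)).norm_map (xs n)).symm.trans_le (hC n)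

theorem WeaklyNull.comp_tendsto (hxs : WeaklyNull xs) {φ : ℕ → ℕ} (hφ : Tendsto φ atTop atTop) :
    WeaklyNull (xs ∘ φ) :=
  fun f => (hxs f).comp hφ

theorem WeaklyNull.map (hxs : WeaklyNull xs) (T : X →L[ℝ] Y) : WeaklyNull fun n => T (xs n) :=
  fun f => hxs (f.comp T)

theorem IsCompactOperator.tendsto_zero_of_weaklyNull {K : X →L[ℝ] Y} (hK : IsCompactOperator K)
    (hxs : WeaklyNull xs) : Tendsto (fun n => K (xs n)) atTop (𝓝 0) := by
  obtain ⟨S, hS, hKS⟩ := hK.image_subset_compact_of_bounded hxs.isBounded_range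
  refine hS.tendsto_nhds_of_unique_mapClusterPt
    (Eventually.of_forall fun n => hKS ⟨xs n, ⟨n, rfl⟩, rfl⟩) fun v _ hv => ?_
  refine SeparatingDual.eq_zero_of_forall_dual_eq_zero (R := ℝ) fun f => eq_of_nhds_neBot ?_
  -- `f v` is a cluster point of `f ∘ K ∘ xs`, which tends to `0`
  exact (hv.continuousAt_comp f.continuous.continuousAt).neBot.mono
    (inf_le_inf_left _ ((hxs.map K) f))

end WeaklyNull

section Symmetry

variable {X : Type*} [NormedAddCommGroup X] [NormedSpace ℝ X] {x : X} {xs : ℕ → X} {a b : ℝ}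

theorem IsCompactOperator.le_of_tendsto_norm_add_sub {K : X →L[ℝ] X} (hK : IsCompactOperator K)
    (hxs : WeaklyNull xs) (ha : Tendsto (fun n => ‖x + xs n‖) atTop (𝓝 a))
    (hb : Tendsto (fun n => ‖x - xs n‖) atTop (𝓝 b)) :
    b ≤ ‖ContinuousLinearMap.id ℝ X - (2 : ℝ) • K‖ * a + 2 * ‖K x - x‖ := by
  set D := ContinuousLinearMap.id ℝ X - (2 : ℝ) • K
  have hdecomp : ∀ n, x - xs n = (2 : ℝ) • (x - K x) - (2 : ℝ) • K (xs n) - D (x + xs n) := by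
    intro n
    simp only [D, sub_apply, ContinuousLinearMap.id_apply, smul_apply, map_add]
    module
  have hbound : ∀ n, ‖x - xs n‖ ≤ ‖D‖ * ‖x + xs n‖ + 2 * ‖K x - x‖ + 2 * ‖K (xs n)‖ := by
    intro n
    rw [hdecomp n]
    refine (norm_sub_le _ _).trans ?_
    grw [norm_sub_le, D.le_opNorm, norm_smul, norm_smul]
    rw [norm_sub_rev x, Real.norm_two]
    linarith
  have hlim := ((ha.const_mul ‖D‖).add_const (2 * ‖K x - x‖)).add
    ((hK.tendsto_zero_of_weaklyNull hxs).norm.const_mul 2)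
  rw [norm_zero, mul_zero, add_zero] at hlim
  exact le_of_tendsto_of_tendsto' hb hlim hbound

theorem le_of_tendsto_norm_add_sub {K : ℕ → X →L[ℝ] X} (hKc : ∀ n, IsCompactOperator (K n))
    (hKx : Tendsto (fun n => K n x) atTop (𝓝 x))
    (hKn : Tendsto (fun n => ‖ContinuousLinearMap.id ℝ X - (2 : ℝ) • K n‖) atTop (𝓝 1))
    (hxs : WeaklyNull xs) (ha : Tendsto (fun n => ‖x + xs n‖) atTop (𝓝 a))
    (hb : Tendsto (fun n => ‖x - xs n‖) atTop (𝓝 b)) : b ≤ a := by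
  have hlim := (hKn.mul_const a).add ((tendsto_iff_norm_sub_tendsto_zero.1 hKx).const_mul 2)
  simp only [one_mul, mul_zero, add_zero] at hlim
  exact ge_of_tendsto' hlim fun n => (hKc n).le_of_tendsto_norm_add_sub hxs ha hb

end Symmetry

theorem Ineq7.le_of_tendsto {X : Type*} [NormedAddCommGroup X] [NormedSpace ℝ X] {q : ℝ}
    (h7 : Ineq7 X q) (hq : 0 ≤ q) {x : X} {xs : ℕ → X} (hxs : WeaklyNull xs) {a b ℓ : ℝ}
    (ha : Tendsto (fun n => ‖x + xs n‖) atTop (𝓝 a))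
    (hb : Tendsto (fun n => ‖x - xs n‖) atTop (𝓝 b))
    (hℓ : Tendsto (fun n => ‖xs n‖) atTop (𝓝 ℓ)) :
    (‖x‖ ^ q + ℓ ^ q) ^ (1 / q) ≤ ((a ^ q + b ^ q) / 2) ^ (1 / q) := by
  have hq' : 0 ≤ 1 / q := one_div_nonneg.2 hq
  have hl := ((hℓ.rpow_const (.inr hq)).const_add (‖x‖ ^ q)).rpow_const (.inr hq')
  have hr := (((ha.rpow_const (.inr hq)).add (hb.rpow_const (.inr hq))).div_const 2).rpow_const
    (.inr hq')
  simpa only [hl.limsup_eq, hr.limsup_eq] using h7 x xs hxs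

namespace lp

variable {α : Type*} {E : α → Type*} [∀ i, NormedAddCommGroup (E i)] {p : ℝ≥0∞}

theorem norm_add_rpow_le (hp : 0 < p.toReal) {u : lp E p} {s : Finset α} (hu : ∀ i ∉ s, u i = 0)
    (z : lp E p) :
    ‖u + z‖ ^ p.toReal ≤ ∑ i ∈ s, ‖u i + z i‖ ^ p.toReal + ‖z‖ ^ p.toReal := by
  have hz := lp.hasSum_norm hp z
  have huz := lp.hasSum_norm hp (u + z)
  rw [← huz.tsum_eq, ← hz.tsum_eq, ← huz.summable.sum_add_tsum_compl (s := s)]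
  refine add_le_add le_rfl ?_
  calc ∑' i : ↑((s : Set α)ᶜ), ‖(u + z) i‖ ^ p.toReal
      = ∑' i : ↑((s : Set α)ᶜ), ‖z i‖ ^ p.toReal := by
        refine tsum_congr fun i => ?_
        rw [coeFn_add, Pi.add_apply, hu i i.2, zero_add]
    _ ≤ ∑' i, ‖z i‖ ^ p.toReal :=
        hz.summable.tsum_subtype_le _ _ fun i => by positivity

theorem le_of_tendsto_norm_add [Fact (1 ≤ p)] (hp : p ≠ ∞) (y : lp E p) {z : ℕ → lp E p}
    (hz : ∀ i, Tendsto (fun n => z n i) atTop (𝓝 0)) {t r : ℝ}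
    (ht : Tendsto (fun n => ‖z n‖) atTop (𝓝 t)) (hr : Tendsto (fun n => ‖y + z n‖) atTop (𝓝 r)) :
    r ≤ (‖y‖ ^ p.toReal + t ^ p.toReal) ^ (1 / p.toReal) := by
  have hq : 0 < p.toReal := ENNReal.toReal_pos (zero_lt_one.trans_le Fact.out).ne' hp
  set q := p.toReal
  classical
  set u : Finset α → lp E p := fun s => ∑ i ∈ s, lp.single p i (y i)
  have hu : ∀ s i, u s i = if i ∈ s then y i else 0 := fun s i => by
    simp only [u, coeFn_sum, Finset.sum_apply, lp.coeFn_single, Finset.sum_pi_single]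
  have key : ∀ s, r ≤ ‖y - u s‖ + (∑ i ∈ s, ‖y i‖ ^ q + t ^ q) ^ (1 / q) := by
    intro s
    have hlim : Tendsto (fun n => (∑ i ∈ s, ‖u s i + z n i‖ ^ q + ‖z n‖ ^ q) ^ (1 / q)) atTop
        (𝓝 ((∑ i ∈ s, ‖y i‖ ^ q + t ^ q) ^ (1 / q))) := by
      refine ((tendsto_finsetSum s fun i hi => ?_).add (ht.rpow_const (.inr hq.le))).rpow_const
        (.inr (by positivity))
      simpa [hu, hi] using ((hz i).const_add (y i)).norm.rpow_const (.inr hq.le)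
    refine le_of_tendsto_of_tendsto' hr (hlim.const_add _) fun n => ?_
    calc ‖y + z n‖ = ‖(y - u s) + (u s + z n)‖ := by abel_nf
      _ ≤ ‖y - u s‖ + ‖u s + z n‖ := norm_add_le _ _
      _ ≤ _ := by
        gcongr
        rw [one_div, Real.le_rpow_inv_iff_of_pos (norm_nonneg _) (by positivity) hq]
        exact norm_add_rpow_le hq (fun i hi => by simp [hu, hi]) (z n)
  have hlim : Tendsto (fun s => ‖y - u s‖ + (∑ i ∈ s, ‖y i‖ ^ q + t ^ q) ^ (1 / q)) atTop
      (𝓝 (0 + (‖y‖ ^ q + t ^ q) ^ (1 / q))) := by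
    refine .add ?_ (((lp.hasSum_norm hq y).add_const _).rpow_const (.inr (by positivity)))
    have hy : Tendsto u atTop (𝓝 y) := lp.hasSum_single hp y
    simpa only [norm_sub_rev y] using tendsto_iff_norm_sub_tendsto_zero.1 hy
  rw [zero_add] at hlim
  exact ge_of_tendsto' hlim key

end lp

theorem exists_subseq_tendsto_limsup_and_tendsto {E : Type*} [PseudoMetricSpace E] [ProperSpace E]
    {u : ℕ → ℝ} {v : ℕ → E} (hu : Bornology.IsBounded (Set.range u))
    (hv : Bornology.IsBounded (Set.range v)) :
    ∃ φ : ℕ → ℕ, Tendsto φ atTop atTop ∧ Tendsto (u ∘ φ) atTop (𝓝 (limsup u atTop)) ∧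
      ∃ w, Tendsto (v ∘ φ) atTop (𝓝 w) := by
  obtain ⟨m, hm⟩ := hu.bddBelow
  obtain ⟨ψ, hψu, hψ⟩ := exists_seq_tendsto_limsup (f := atTop) (u := u)
    (isCoboundedUnder_le_of_le atTop fun n => hm ⟨n, rfl⟩) hu.bddAbove.isBoundedUnder_of_range
  obtain ⟨w, -, φ, hφ, hw⟩ := tendsto_subseq_of_bounded hv (x := v ∘ ψ) fun n => ⟨ψ n, rfl⟩
  exact ⟨ψ ∘ φ, hψ.comp hφ.tendsto_atTop, hψu.comp hφ.tendsto_atTop, w, hw⟩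

theorem le_of_tendsto_of_ineq7 {p : ℝ≥0∞} [Fact (1 ≤ p)] (hp : p ≠ ∞)
    {X : Type*} [NormedAddCommGroup X] [NormedSpace ℝ X] {K : ℕ → X →L[ℝ] X}
    (hKc : ∀ n, IsCompactOperator (K n)) (hKx : ∀ x : X, Tendsto (fun n => K n x) atTop (𝓝 x))
    (hKn : Tendsto (fun n => ‖ContinuousLinearMap.id ℝ X - (2 : ℝ) • K n‖) atTop (𝓝 1))
    (h7 : Ineq7 X p.toReal) {T : X →L[ℝ] lp (fun _ : ℕ => ℝ) p} (hT : ‖T‖ ≤ 1)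
    {x : X} {y : lp (fun _ : ℕ => ℝ) p} (hyx : ‖y‖ ≤ ‖x‖) {xs : ℕ → X} (hxs : WeaklyNull xs)
    {a b ℓ t r : ℝ} (ha : Tendsto (fun n => ‖x + xs n‖) atTop (𝓝 a))
    (hb : Tendsto (fun n => ‖x - xs n‖) atTop (𝓝 b)) (hℓ : Tendsto (fun n => ‖xs n‖) atTop (𝓝 ℓ))
    (ht : Tendsto (fun n => ‖T (xs n)‖) atTop (𝓝 t))
    (hr : Tendsto (fun n => ‖y + T (xs n)‖) atTop (𝓝 r)) : r ≤ a := by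
  set q := p.toReal
  have hq : 0 < q := ENNReal.toReal_pos (zero_lt_one.trans_le Fact.out).ne' hp
  have hba : b ≤ a := le_of_tendsto_norm_add_sub hKc (hKx x) hKn hxs ha hb
  have htℓ : t ≤ ℓ :=
    le_of_tendsto_of_tendsto' ht hℓ fun n => (T.le_of_opNorm_le hT _).trans_eq (one_mul _)
  have ha0 : 0 ≤ a := ge_of_tendsto' ha fun _ => norm_nonneg _
  have hb0 : 0 ≤ b := ge_of_tendsto' hb fun _ => norm_nonneg _
  have ht0 : 0 ≤ t := ge_of_tendsto' ht fun _ => norm_nonneg _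
  have hcoord (i : ℕ) : Tendsto (fun n => T (xs n) i) atTop (𝓝 0) :=
    (hxs.map T) (lp.evalCLM ℝ (fun _ : ℕ => ℝ) p i)
  calc r ≤ (‖y‖ ^ q + t ^ q) ^ (1 / q) := lp.le_of_tendsto_norm_add hp y hcoord ht hr
    _ ≤ (‖x‖ ^ q + ℓ ^ q) ^ (1 / q) := by gcongr
    _ ≤ ((a ^ q + b ^ q) / 2) ^ (1 / q) := h7.le_of_tendsto hq.le hxs ha hb hℓ
    _ ≤ (a ^ q) ^ (1 / q) := by gcongr; linarith [show b ^ q ≤ a ^ q by gcongr]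
    _ = a := by rw [one_div, Real.rpow_rpow_inv ha0 hq.ne']

theorem propertyM_of_ineq7_general (p : ℝ≥0∞) [Fact (1 ≤ p)] (hp' : p ≠ ∞)
    (X : Type*) [NormedAddCommGroup X] [NormedSpace ℝ X]
    (K : ℕ → X →L[ℝ] X) (hK : ABC K) (h7 : Ineq7 X p.toReal)
    (T : X →L[ℝ] lp (fun _ : ℕ => ℝ) p) (hT : ‖T‖ ≤ 1) :
    ∀ (x : X) (y : lp (fun _ : ℕ => ℝ) p) (xs : ℕ → X), ‖y‖ ≤ ‖x‖ → WeaklyNull xs →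
      limsup (fun n => ‖y + T (xs n)‖) atTop ≤ limsup (fun n => ‖x + xs n‖) atTop := by
  intro x y xs hyx hxs
  obtain ⟨hKc, hKx, -, hKn⟩ := hK
  obtain ⟨C, hC⟩ := isBounded_iff_forall_norm_le.1 hxs.isBounded_range
  have hxsC (n : ℕ) : ‖xs n‖ ≤ C := hC _ ⟨n, rfl⟩
  have hTxs (n : ℕ) : ‖T (xs n)‖ ≤ ‖xs n‖ := (T.le_of_opNorm_le hT _).trans_eq (one_mul _)
  have hR (n : ℕ) : ‖x + xs n‖ ≤ ‖x‖ + C := by grw [norm_add_le, hxsC]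
  obtain ⟨φ, hφ, hr, w, hw⟩ := exists_subseq_tendsto_limsup_and_tendsto
    (u := fun n => ‖y + T (xs n)‖) (v := fun n => ![‖x + xs n‖, ‖x - xs n‖, ‖xs n‖, ‖T (xs n)‖])
    (isBounded_iff_forall_norm_le.2 ⟨‖x‖ + C, by
      rintro _ ⟨n, rfl⟩
      grw [norm_norm, norm_add_le, hyx, hTxs, hxsC]⟩)
    (isBounded_iff_forall_norm_le.2 ⟨‖x‖ + C, by
      rintro _ ⟨n, rfl⟩
      refine (pi_norm_le_iff_of_nonneg ((norm_nonneg _).trans (hR n))).2 fun i => ?_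
      fin_cases i <;> simp <;> linarith [hR n, norm_sub_le x (xs n), hxsC n, hTxs n, norm_nonneg x]⟩)
  have ha : Tendsto (fun k => ‖x + xs (φ k)‖) atTop (𝓝 (w 0)) := tendsto_pi_nhds.1 hw 0
  calc limsup (fun n => ‖y + T (xs n)‖) atTop
      ≤ w 0 := le_of_tendsto_of_ineq7 hp' hKc hKx hKn h7 hT hyx (hxs.comp_tendsto hφ) ha
        (tendsto_pi_nhds.1 hw 1) (tendsto_pi_nhds.1 hw 2) (tendsto_pi_nhds.1 hw 3) hr
    _ = limsup (fun k => ‖x + xs (φ k)‖) atTop := ha.limsup_eq.symm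
    _ ≤ limsup (fun n => ‖x + xs n‖) atTop :=
      hφ.limsup_comp_le_limsup (u := fun n => ‖x + xs n‖)
        (isCoboundedUnder_le_of_le _ fun _ => norm_nonneg _) (isBoundedUnder_of ⟨_, hR⟩)

/-- If `X` admits compact operators satisfying (a)–(c) and inequality (7) holds for `X` and `p`,
then every contraction `T : X → ℓ_p` has property (M). -/
theorem propertyM_of_ineq7 (p : ℝ≥0∞) [Fact (1 ≤ p)] (hp : 1 < p) (hp' : p ≠ ∞)
    (X : Type*) [NormedAddCommGroup X] [NormedSpace ℝ X] [CompleteSpace X]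
    (K : ℕ → X →L[ℝ] X) (hK : ABC K) (h7 : Ineq7 X p.toReal)
    (T : X →L[ℝ] lp (fun _ : ℕ => ℝ) p) (hT : ‖T‖ ≤ 1) :
    ∀ (x : X) (y : lp (fun _ : ℕ => ℝ) p) (xs : ℕ → X), ‖y‖ ≤ ‖x‖ → WeaklyNull xs →
      limsup (fun n => ‖y + T (xs n)‖) atTop ≤ limsup (fun n => ‖x + xs n‖) atTop :=
  propertyM_of_ineq7_general p hp' X K hK h7 T hT
end
end

section
/- Let 1 < p < ∞, let X be a Banach space admitting a sequence of compact operators (K_n) on X satisfying conditions (a)–(c), and suppose inequality (7) holds for X and p. Let Y be a Banach space with the property that limsup_n ‖y + y_n‖ ≤ limsup_n (‖y‖^p + ‖y_n‖^p)^{1/p} for every y ∈ Y and every weakly null sequence (y_n) in Y. Then K(X, Y) is an M-ideal in L(X, Y). -/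
open Filter Topology NormedSpace ENNReal MeasureTheory

noncomputable section

/-- finitary weak-to-norm continuity at 0 of a compact operator on bounded sets -/
lemma lemW {X Y : Type*} [NormedAddCommGroup X] [NormedSpace ℝ X]
    [NormedAddCommGroup Y] [NormedSpace ℝ Y]
    (S : X →L[ℝ] Y) (hS : IsCompactOperator S) (C : ℝ) {ε : ℝ} (hε : 0 < ε) :
    ∃ (t : Finset (StrongDual ℝ X)) (δ : ℝ), 0 < δ ∧
      ∀ x : X, ‖x‖ ≤ C → (∀ g ∈ t, |g x| ≤ δ) → ‖S x‖ ≤ ε := by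
  obtain ⟨Kc, hKc, him⟩ := hS.image_subset_compact_of_bounded (𝕜₁ := ℝ)
      (f := (S : X →ₗ[ℝ] Y)) (S := Metric.closedBall (0:X) C) Metric.isBounded_closedBall
  obtain ⟨net, -, hnetfin, hnet⟩ := hKc.finite_cover_balls (show (0:ℝ) < ε/3 by linarith)
  classical
  -- choose norming functionals
  have hg : ∀ y : Y, ∃ g : StrongDual ℝ Y, ‖g‖ ≤ 1 ∧ g y = ‖y‖ := by
    intro y
    by_cases hy : y = 0
    · exact ⟨0, by simp [hy]⟩
    · obtain ⟨g, hg1, hg2⟩ := exists_dual_vector ℝ y (norm_ne_zero_iff.2 hy)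
      exact ⟨g, le_of_eq hg1, by simpa using hg2⟩
  choose g hg1 hg2 using hg
  refine ⟨(hnetfin.toFinset).image (fun y => (g y).comp S), ε/3, by linarith, ?_⟩
  intro x hx hgx
  have hSx : S x ∈ Kc := him ⟨x, by simpa [Metric.mem_closedBall, dist_eq_norm] using hx, rfl⟩
  obtain ⟨y, hy, hxy⟩ := Set.mem_iUnion₂.1 (hnet hSx)
  have hdist : ‖S x - y‖ < ε/3 := by
    simpa [Metric.mem_ball, dist_eq_norm] using hxy
  have hgy : |(g y) (S x)| ≤ ε/3 := by
    have := hgx ((g y).comp S) (Finset.mem_image.2 ⟨y, hnetfin.mem_toFinset.2 hy, rfl⟩)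
    simpa using this
  have hyn : ‖y‖ ≤ 2*ε/3 := by
    by_contra hcon
    push_neg at hcon
    have h1 : (g y) (S x) = (g y) (S x - y) + ‖y‖ := by
      rw [map_sub]; rw [hg2 y]; ring
    have h2 : |(g y) (S x - y)| ≤ ‖S x - y‖ := by
      calc |(g y) (S x - y)| ≤ ‖g y‖ * ‖S x - y‖ := (g y).le_opNorm _
        _ ≤ 1 * ‖S x - y‖ := by
            exact mul_le_mul_of_nonneg_right (hg1 y) (norm_nonneg _)
        _ = ‖S x - y‖ := one_mul _
    have : (g y) (S x) > ε/3 := by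
      have := abs_le.1 h2
      linarith [this.1]
    linarith [abs_le.1 hgy |>.2, this]
  have : ‖S x‖ ≤ ‖S x - y‖ + ‖y‖ := by
    have := norm_sub_norm_le (S x) y
    have h := abs_le.1 (abs_norm_sub_norm_le (S x) y)
    linarith [h.1]
  linarith

/-- For a compact operator `S` and a sequence `Kₙ` with `‖Kₙ‖ ≤ C` whose adjoints converge
pointwise in norm, `S ∘ Kₙ → S` in operator norm. -/
lemma lemS2 {X Z : Type*} [NormedAddCommGroup X] [NormedSpace ℝ X]
    [NormedAddCommGroup Z] [NormedSpace ℝ Z]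
    (K : ℕ → X →L[ℝ] X) {C : ℝ} (hC : ∀ n, ‖K n‖ ≤ C)
    (hb : ∀ f : StrongDual ℝ X, Tendsto (fun n => f.comp (K n)) atTop (𝓝 f))
    (S : X →L[ℝ] Z) (hS : IsCompactOperator S) :
    Tendsto (fun n => ‖S.comp (K n) - S‖) atTop (𝓝 0) := by
  have key : ∀ ε : ℝ, 0 < ε → ∀ᶠ n in atTop, ‖S.comp (K n) - S‖ ≤ ε := by
    intro ε hε
    obtain ⟨t, δ, hδ, ht⟩ := lemW S hS (C + 1) hε
    have hev : ∀ᶠ n in atTop, ∀ g ∈ t, ‖g.comp (K n) - g‖ ≤ δ := by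
      rw [eventually_all_finset]
      intro g _
      have h1 : Tendsto (fun n => g.comp (K n) - g) atTop (𝓝 (g - g)) :=
        (hb g).sub tendsto_const_nhds
      rw [sub_self] at h1
      have h2 := (h1.norm.eventually_le_const (by simpa using hδ))
      exact h2
    filter_upwards [hev] with n hn
    refine ContinuousLinearMap.opNorm_le_bound _ (le_of_lt hε) ?_
    intro x
    rcases eq_or_ne x 0 with rfl | hx
    · simp
    · have hxn : 0 < ‖x‖ := norm_pos_iff.2 hx
      set u := ‖x‖⁻¹ • x with hu
      have hun : ‖u‖ = 1 := norm_smul_inv_norm hx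
      have hw : ‖K n u - u‖ ≤ C + 1 := by
        calc ‖K n u - u‖ ≤ ‖K n u‖ + ‖u‖ := norm_sub_le _ _
          _ ≤ ‖K n‖ * ‖u‖ + ‖u‖ := by linarith [(K n).le_opNorm u]
          _ ≤ C + 1 := by rw [hun]; linarith [hC n]
      have hgw : ∀ g ∈ t, |g (K n u - u)| ≤ δ := by
        intro g hgt
        have : |(g.comp (K n) - g) u| ≤ ‖g.comp (K n) - g‖ * ‖u‖ :=
          (g.comp (K n) - g).le_opNorm u
        rw [hun, mul_one] at this
        have h2 : (g.comp (K n) - g) u = g (K n u - u) := by simp [map_sub]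
        rw [h2] at this
        exact this.trans (hn g hgt)
      have hSsmall : ‖S (K n u - u)‖ ≤ ε := ht _ hw hgw
      have heq : (S.comp (K n) - S) x = ‖x‖ • (S (K n u - u)) := by
        simp only [hu, map_sub, ContinuousLinearMap.coe_sub', Pi.sub_apply,
          ContinuousLinearMap.coe_comp', Function.comp_apply, _root_.map_smul]
        rw [smul_sub]
        congr 1 <;> rw [smul_smul, mul_inv_cancel₀ (ne_of_gt hxn), one_smul]
      calc ‖(S.comp (K n) - S) x‖ = ‖x‖ * ‖S (K n u - u)‖ := by
            rw [heq, norm_smul, Real.norm_eq_abs, abs_of_pos hxn]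
        _ ≤ ε * ‖x‖ := by rw [mul_comm]; exact mul_le_mul_of_nonneg_right hSsmall (le_of_lt hxn)
    
  rw [Metric.tendsto_atTop]
  intro ε hε
  obtain ⟨N, hN⟩ := (key (ε/2) (by linarith)).exists_forall_of_atTop
  exact ⟨N, fun n hn => by
    rw [Real.dist_eq, sub_zero, abs_of_nonneg (norm_nonneg _)]
    exact lt_of_le_of_lt (hN n hn) (by linarith)⟩

set_option maxHeartbeats 1000000 in
lemma lemCore (p : ℝ) (hp : 1 < p)
    {X : Type*} [NormedAddCommGroup X] [NormedSpace ℝ X]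
    (K : ℕ → X →L[ℝ] X) (hK : ABC K) (h7 : Ineq7 X p)
    {Y : Type*} [NormedAddCommGroup Y] [NormedSpace ℝ Y]
    (hY : ∀ (y : Y) (ys : ℕ → Y), WeaklyNull ys →
      limsup (fun n => ‖y + ys n‖) atTop ≤
      limsup (fun n => (‖y‖ ^ p + ‖ys n‖ ^ p) ^ (1 / p)) atTop)
    (T S : X →L[ℝ] Y) (hT : ‖T‖ ≤ 1) (hS : ‖S‖ ≤ 1) (hSc : IsCompactOperator S)
    {ε : ℝ} (hε : 0 < ε) :
    ∀ᶠ n in atTop, ‖T - T.comp (K n) + S.comp (K n)‖ ≤ 1 + ε := by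
  classical
  obtain ⟨hcomp, ha, hb, hc⟩ := hK
  have hp0 : (0:ℝ) < p := by linarith
  have hp0' : p ≠ 0 := ne_of_gt hp0
  have hip : (0:ℝ) < 1/p := by positivity
  -- global bound on ‖K n‖
  obtain ⟨M, hM⟩ : ∃ M, ∀ n, ‖ContinuousLinearMap.id ℝ X - (2:ℝ) • K n‖ ≤ M := by
    obtain ⟨M, hM⟩ := hc.bddAbove_range
    exact ⟨M, fun n => hM ⟨n, rfl⟩⟩
  set C : ℝ := (1 + M) / 2 with hCdef
  have hCK : ∀ n, ‖K n‖ ≤ C := by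
    intro n
    have h2 : ContinuousLinearMap.id ℝ X - (ContinuousLinearMap.id ℝ X - (2:ℝ) • K n)
        = (2:ℝ) • K n := sub_sub_cancel _ _
    have h3 : ‖(2:ℝ) • K n‖ ≤ 1 + M := by
      rw [← h2]
      refine (norm_sub_le _ _).trans ?_
      have := ContinuousLinearMap.norm_id_le (E := X) (𝕜 := ℝ)
      linarith [hM n]
    have h4 : ‖(2:ℝ) • K n‖ = 2 * ‖K n‖ := by
      rw [norm_smul (2:ℝ) (K n)]; norm_num
    rw [hCdef]; rw [h4] at h3; linarith
  have hC0 : 0 ≤ C := le_trans (norm_nonneg _) (hCK 0)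
  -- contradiction setup
  by_contra hcon
  rw [Filter.not_eventually] at hcon
  have hcon' : ∃ᶠ n in atTop, 1 + ε < ‖T - T.comp (K n) + S.comp (K n)‖ :=
    hcon.mono fun n hn => lt_of_not_ge hn
  set ε' : ℝ := min (ε/16) 1 with hε'def
  have hε'pos : 0 < ε' := lt_min (by linarith) one_pos
  have hε'1 : ε' ≤ 1 := min_le_right _ _
  have hε'ε : ε' ≤ ε/16 := min_le_left _ _
  -- eventual bounds
  have hcev : ∀ᶠ n in atTop, ‖ContinuousLinearMap.id ℝ X - (2:ℝ) • K n‖ ≤ 1 + ε' :=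
    (hc.eventually (eventually_lt_nhds (show (1:ℝ) < 1 + ε' by linarith))).mono
      fun n hn => le_of_lt hn
  have hS2ev : ∀ᶠ n in atTop, ‖S.comp (K n) - S‖ ≤ ε' :=
    ((lemS2 K hCK hb S hSc).eventually (eventually_lt_nhds hε'pos)).mono
      fun n hn => le_of_lt hn
  obtain ⟨m, hm1, hm2⟩ := (hS2ev.and hcev).exists
  have hKm2ev : ∀ᶠ n in atTop, ‖(K m).comp (K n) - K m‖ ≤ ε' :=
    ((lemS2 K hCK hb (K m) (hcomp m)).eventually (eventually_lt_nhds hε'pos)).mono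
      fun n hn => le_of_lt hn
  -- extraction of indices with big norm
  obtain ⟨φ, hφmono, hφ⟩ := Filter.extraction_of_frequently_atTop hcon'
  have hxex : ∀ k, ∃ z : X, ‖z‖ < 1 ∧
      1 + ε < ‖(T - T.comp (K (φ k)) + S.comp (K (φ k))) z‖ := fun k =>
    (T - T.comp (K (φ k)) + S.comp (K (φ k))).exists_lt_apply_of_lt_opNorm (hφ k)
  choose x hx1 hx2 using hxex
  have hx1' : ∀ k, ‖x k‖ ≤ 1 := fun k => le_of_lt (hx1 k)
  set u : ℕ → X := fun k => K (φ k) (x k) with hudef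
  set v : ℕ → X := fun k => x k - u k with hvdef
  have hxval : ∀ k, 1 + ε < ‖T (v k) + S (u k)‖ := by
    intro k
    have h1 : (T - T.comp (K (φ k)) + S.comp (K (φ k))) (x k) = T (v k) + S (u k) := by
      simp only [hvdef, hudef, ContinuousLinearMap.add_apply, ContinuousLinearMap.sub_apply,
        ContinuousLinearMap.coe_comp', Function.comp_apply, map_sub]
    rw [← h1]; exact hx2 k
  have hub : ∀ k, ‖u k‖ ≤ C := by
    intro k
    calc ‖u k‖ ≤ ‖K (φ k)‖ * ‖x k‖ := (K (φ k)).le_opNorm _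
      _ ≤ C * 1 := mul_le_mul (hCK _) (hx1' k) (norm_nonneg _) hC0
      _ = C := mul_one _
  have hvb : ∀ k, ‖v k‖ ≤ 1 + C := by
    intro k
    calc ‖v k‖ ≤ ‖x k‖ + ‖u k‖ := norm_sub_le _ _
      _ ≤ 1 + C := add_le_add (hx1' k) (hub k)
  -- v is weakly null
  have hvweak : WeaklyNull v := by
    intro f
    have h1 : Tendsto (fun n => ‖f - f.comp (K n)‖) atTop (𝓝 0) := by
      have h2 := tendsto_iff_norm_sub_tendsto_zero.1 (hb f)
      have h3 : (fun n => ‖f - f.comp (K n)‖) = fun n => ‖f.comp (K n) - f‖ := by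
        funext n; rw [norm_sub_rev]
      rw [h3]; exact h2
    have h4 : Tendsto (fun k => ‖f - f.comp (K (φ k))‖) atTop (𝓝 0) :=
      h1.comp hφmono.tendsto_atTop
    refine squeeze_zero_norm ?_ h4
    intro k
    have h5 : f (v k) = (f - f.comp (K (φ k))) (x k) := by
      simp only [hvdef, hudef, ContinuousLinearMap.sub_apply,
        ContinuousLinearMap.coe_comp', Function.comp_apply, map_sub]
    rw [h5]
    calc ‖(f - f.comp (K (φ k))) (x k)‖
        ≤ ‖f - f.comp (K (φ k))‖ * ‖x k‖ := (f - f.comp (K (φ k))).le_opNorm _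
      _ ≤ ‖f - f.comp (K (φ k))‖ * 1 :=
          mul_le_mul_of_nonneg_left (hx1' k) (norm_nonneg _)
      _ = ‖f - f.comp (K (φ k))‖ := mul_one _
  -- subsequence extractions
  have hQ : IsCompact (closure (⇑(K m) '' Metric.closedBall 0 1)) :=
    IsCompactOperator.isCompact_closure_image_closedBall (𝕜₁ := ℝ)
      (f := (K m : X →ₗ[ℝ] X)) (hcomp m) 1
  have hmemQ : ∀ k, K m (x k) ∈ closure (⇑(K m) '' Metric.closedBall 0 1) := by
    intro k
    exact subset_closure ⟨x k, by
      simp only [Metric.mem_closedBall, dist_zero_right]; exact hx1' k, rfl⟩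
  obtain ⟨x₀, -, ψ₁, hψ₁mono, hψ₁⟩ := hQ.tendsto_subseq hmemQ
  obtain ⟨α, hαmem, ψ₂, hψ₂mono, hψ₂⟩ :=
    (isCompact_Icc (a := (0:ℝ)) (b := 1 + C)).tendsto_subseq
      (x := fun k => ‖v (ψ₁ k)‖) (fun k => ⟨norm_nonneg _, hvb _⟩)
  have hTvb : ∀ k, ‖T (v (ψ₁ (ψ₂ k)))‖ ≤ 1 + C := by
    intro k
    calc ‖T (v (ψ₁ (ψ₂ k)))‖ ≤ ‖T‖ * ‖v (ψ₁ (ψ₂ k))‖ := T.le_opNorm _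
      _ ≤ 1 * (1 + C) := mul_le_mul hT (hvb _) (norm_nonneg _) zero_le_one
      _ = 1 + C := one_mul _
  obtain ⟨τ, hτmem, ψ₃, hψ₃mono, hψ₃⟩ :=
    (isCompact_Icc (a := (0:ℝ)) (b := 1 + C)).tendsto_subseq
      (x := fun k => ‖T (v (ψ₁ (ψ₂ k)))‖) (fun k => ⟨norm_nonneg _, hTvb _⟩)
  set ρ : ℕ → ℕ := fun k => ψ₁ (ψ₂ (ψ₃ k)) with hρdef
  have hρmono : StrictMono ρ := hψ₁mono.comp (hψ₂mono.comp hψ₃mono)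
  set w : ℕ → X := fun k => v (ρ k) with hwdef
  have hα : Tendsto (fun k => ‖w k‖) atTop (𝓝 α) := by
    have := hψ₂.comp hψ₃mono.tendsto_atTop
    exact this
  have hτt : Tendsto (fun k => ‖T (w k)‖) atTop (𝓝 τ) := hψ₃
  have hx₀ : Tendsto (fun k => K m (x (ρ k))) atTop (𝓝 x₀) := by
    have := hψ₁.comp (hψ₂mono.comp hψ₃mono).tendsto_atTop
    exact this
  have hwweak : WeaklyNull w := fun f => (hvweak f).comp hρmono.tendsto_atTop
  have hval : ∀ k, 1 + ε < ‖T (w k) + S (u (ρ k))‖ := fun k => hxval (ρ k)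
  have hτα : τ ≤ α := by
    refine le_of_tendsto_of_tendsto' hτt hα ?_
    intro k
    calc ‖T (w k)‖ ≤ ‖T‖ * ‖w k‖ := T.le_opNorm _
      _ ≤ 1 * ‖w k‖ := mul_le_mul_of_nonneg_right hT (norm_nonneg _)
      _ = ‖w k‖ := one_mul _
  have hα0 : 0 ≤ α := hαmem.1
  have hτ0 : 0 ≤ τ := hτmem.1
  set y₀ : Y := S x₀ with hy₀def
  have hx₀ev : ∀ᶠ k in atTop, ‖K m (x (ρ k)) - x₀‖ ≤ ε' := by
    have h2 : Tendsto (fun k => ‖K m (x (ρ k)) - x₀‖) atTop (𝓝 0) :=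
      tendsto_iff_norm_sub_tendsto_zero.1 hx₀
    exact (h2.eventually (eventually_lt_nhds hε'pos)).mono fun k hk => le_of_lt hk
  -- S u close to y₀
  have hSuev : ∀ᶠ k in atTop, ‖S (u (ρ k)) - y₀‖ ≤ 3 * ε' := by
    have e1 : ∀ᶠ k in atTop, ‖S.comp (K (φ (ρ k))) - S‖ ≤ ε' :=
      (hφmono.comp hρmono).tendsto_atTop.eventually hS2ev
    filter_upwards [e1, hx₀ev] with k h1 h3
    have hd : S (u (ρ k)) - y₀ =
        (S.comp (K (φ (ρ k))) - S) (x (ρ k)) + ((S - S.comp (K m)) (x (ρ k))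
          + (S (K m (x (ρ k))) - S x₀)) := by
      simp only [hudef, hy₀def, ContinuousLinearMap.sub_apply,
        ContinuousLinearMap.coe_comp', Function.comp_apply]
      abel
    rw [hd]
    have b1 : ‖(S.comp (K (φ (ρ k))) - S) (x (ρ k))‖ ≤ ε' := by
      calc ‖(S.comp (K (φ (ρ k))) - S) (x (ρ k))‖
          ≤ ‖S.comp (K (φ (ρ k))) - S‖ * ‖x (ρ k)‖ := ContinuousLinearMap.le_opNorm _ _
        _ ≤ ε' * 1 := mul_le_mul h1 (hx1' _) (norm_nonneg _) (le_of_lt hε'pos)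
        _ = ε' := mul_one _
    have b2 : ‖(S - S.comp (K m)) (x (ρ k))‖ ≤ ε' := by
      calc ‖(S - S.comp (K m)) (x (ρ k))‖
          ≤ ‖S - S.comp (K m)‖ * ‖x (ρ k)‖ := ContinuousLinearMap.le_opNorm _ _
        _ ≤ ε' * 1 := by
            refine mul_le_mul ?_ (hx1' _) (norm_nonneg _) (le_of_lt hε'pos)
            rw [norm_sub_rev]; exact hm1
        _ = ε' := mul_one _
    have b3 : ‖S (K m (x (ρ k))) - S x₀‖ ≤ ε' := by
      have : S (K m (x (ρ k))) - S x₀ = S (K m (x (ρ k)) - x₀) := by rw [map_sub]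
      rw [this]
      calc ‖S (K m (x (ρ k)) - x₀)‖ ≤ ‖S‖ * ‖K m (x (ρ k)) - x₀‖ := S.le_opNorm _
        _ ≤ 1 * ε' := mul_le_mul hS h3 (norm_nonneg _) zero_le_one
        _ = ε' := one_mul _
    have habc := norm_add_le ((S.comp (K (φ (ρ k))) - S) (x (ρ k)))
      (((S - S.comp (K m)) (x (ρ k))) + (S (K m (x (ρ k))) - S x₀))
    have hbc := norm_add_le ((S - S.comp (K m)) (x (ρ k))) (S (K m (x (ρ k))) - S x₀)
    linarith
  -- lower bound for limsup of ‖y₀ + T (w k)‖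
  have hfreq : ∀ᶠ k in atTop, 1 + ε - 3*ε' ≤ ‖y₀ + T (w k)‖ := by
    filter_upwards [hSuev] with k hk
    have h1 := hval k
    have h2 : ‖T (w k) + S (u (ρ k))‖ ≤ ‖y₀ + T (w k)‖ + ‖S (u (ρ k)) - y₀‖ := by
      have h3 : T (w k) + S (u (ρ k)) = (y₀ + T (w k)) + (S (u (ρ k)) - y₀) := by abel
      rw [h3]; exact norm_add_le _ _
    linarith
  have hbdd1 : IsBoundedUnder (· ≤ ·) atTop (fun k => ‖y₀ + T (w k)‖) := by
    refine isBoundedUnder_of ⟨‖y₀‖ + (1 + C), fun k => ?_⟩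
    calc ‖y₀ + T (w k)‖ ≤ ‖y₀‖ + ‖T (w k)‖ := norm_add_le _ _
      _ ≤ ‖y₀‖ + (1 + C) := by
          have : ‖T (w k)‖ ≤ 1 + C := by
            calc ‖T (w k)‖ ≤ ‖T‖ * ‖w k‖ := T.le_opNorm _
              _ ≤ 1 * (1 + C) := mul_le_mul hT (hvb _) (norm_nonneg _) zero_le_one
              _ = 1 + C := one_mul _
          linarith
  have hL1 : 1 + ε - 3*ε' ≤ limsup (fun k => ‖y₀ + T (w k)‖) atTop :=
    le_limsup_of_frequently_le hfreq.frequently hbdd1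
  -- upper estimate in Y
  have hTwweak : WeaklyNull (fun k => T (w k)) := by
    intro g
    have := hwweak (g.comp T)
    simpa using this
  have hYb := hY y₀ (fun k => T (w k)) hTwweak
  have hL2 : limsup (fun k => (‖y₀‖^p + ‖T (w k)‖^p) ^ (1/p)) atTop
      = (‖y₀‖^p + τ^p) ^ (1/p) := by
    refine Filter.Tendsto.limsup_eq ?_
    exact (tendsto_const_nhds.add (hτt.rpow_const (Or.inr (le_of_lt hp0)))).rpow_const
      (Or.inr (le_of_lt hip))
  have hy₀x₀ : ‖y₀‖ ≤ ‖x₀‖ := by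
    calc ‖y₀‖ ≤ ‖S‖ * ‖x₀‖ := S.le_opNorm _
      _ ≤ 1 * ‖x₀‖ := mul_le_mul_of_nonneg_right hS (norm_nonneg _)
      _ = ‖x₀‖ := one_mul _
  have hmono1 : (‖y₀‖^p + τ^p) ^ (1/p) ≤ (‖x₀‖^p + α^p) ^ (1/p) := by
    refine Real.rpow_le_rpow ?_ ?_ (le_of_lt hip)
    · exact add_nonneg (Real.rpow_nonneg (norm_nonneg _) _) (Real.rpow_nonneg hτ0 _)
    · have e1 := Real.rpow_le_rpow (norm_nonneg y₀) hy₀x₀ (le_of_lt hp0)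
      have e2 := Real.rpow_le_rpow hτ0 hτα (le_of_lt hp0)
      linarith
  -- the X-side inequality (7)
  have h7ap := h7 x₀ w hwweak
  have hL3 : limsup (fun k => (‖x₀‖^p + ‖w k‖^p) ^ (1/p)) atTop
      = (‖x₀‖^p + α^p) ^ (1/p) := by
    refine Filter.Tendsto.limsup_eq ?_
    exact (tendsto_const_nhds.add (hα.rpow_const (Or.inr (le_of_lt hp0)))).rpow_const
      (Or.inr (le_of_lt hip))
  -- operator norm bounds for the ± terms
  have hBminus : ∀ᶠ k in atTop,
      ‖K m + K (φ (ρ k)) - ContinuousLinearMap.id ℝ X‖ ≤ 1 + ε' := by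
    filter_upwards [(hφmono.comp hρmono).tendsto_atTop.eventually hcev] with k hk
    simp only [Function.comp_apply] at hk
    set n := φ (ρ k) with hn
    have hid : K m + K n - ContinuousLinearMap.id ℝ X =
        -((2⁻¹:ℝ) • (ContinuousLinearMap.id ℝ X - (2:ℝ) • K m)
          + (2⁻¹:ℝ) • (ContinuousLinearMap.id ℝ X - (2:ℝ) • K n)) := by
      ext z
      simp only [ContinuousLinearMap.add_apply, ContinuousLinearMap.sub_apply,
        ContinuousLinearMap.neg_apply, ContinuousLinearMap.smul_apply,
        ContinuousLinearMap.coe_id', id_eq, ContinuousLinearMap.coe_smul', Pi.smul_apply]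
      module
    rw [hid, norm_neg]
    calc ‖(2⁻¹:ℝ) • (ContinuousLinearMap.id ℝ X - (2:ℝ) • K m)
          + (2⁻¹:ℝ) • (ContinuousLinearMap.id ℝ X - (2:ℝ) • K n)‖
        ≤ ‖(2⁻¹:ℝ) • (ContinuousLinearMap.id ℝ X - (2:ℝ) • K m)‖
          + ‖(2⁻¹:ℝ) • (ContinuousLinearMap.id ℝ X - (2:ℝ) • K n)‖ := norm_add_le _ _
      _ ≤ 2⁻¹ * (1 + ε') + 2⁻¹ * (1 + ε') := by
          have e1 : ‖(2⁻¹:ℝ) • (ContinuousLinearMap.id ℝ X - (2:ℝ) • K m)‖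
              = 2⁻¹ * ‖ContinuousLinearMap.id ℝ X - (2:ℝ) • K m‖ := by
            rw [norm_smul (2⁻¹:ℝ) (ContinuousLinearMap.id ℝ X - (2:ℝ) • K m)]
            norm_num
          have e2 : ‖(2⁻¹:ℝ) • (ContinuousLinearMap.id ℝ X - (2:ℝ) • K n)‖
              = 2⁻¹ * ‖ContinuousLinearMap.id ℝ X - (2:ℝ) • K n‖ := by
            rw [norm_smul (2⁻¹:ℝ) (ContinuousLinearMap.id ℝ X - (2:ℝ) • K n)]
            norm_num
          rw [e1, e2]
          have h5 := hm2
          have h6 := hk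
          nlinarith [h5, h6]
      _ = 1 + ε' := by ring
  have hBplus : ∀ᶠ k in atTop,
      ‖K m + ContinuousLinearMap.id ℝ X - K (φ (ρ k))‖ ≤ 1 + 4*ε' := by
    filter_upwards [(hφmono.comp hρmono).tendsto_atTop.eventually hcev,
      (hφmono.comp hρmono).tendsto_atTop.eventually hKm2ev] with k hk1 hk2
    set n := φ (ρ k) with hn
    have hid : K m + ContinuousLinearMap.id ℝ X - K n =
        (2⁻¹:ℝ) • (ContinuousLinearMap.id ℝ X
          + (ContinuousLinearMap.id ℝ X - (2:ℝ) • K m).comp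
            (ContinuousLinearMap.id ℝ X - (2:ℝ) • K n))
          + (2:ℝ) • (K m - (K m).comp (K n)) := by
      ext z
      simp only [ContinuousLinearMap.add_apply, ContinuousLinearMap.sub_apply,
        ContinuousLinearMap.smul_apply, ContinuousLinearMap.coe_id', id_eq,
        ContinuousLinearMap.coe_smul', Pi.smul_apply, ContinuousLinearMap.coe_comp',
        Function.comp_apply, map_sub, _root_.map_smul]
      module
    rw [hid]
    have e1 : ‖(2⁻¹:ℝ) • (ContinuousLinearMap.id ℝ X
          + (ContinuousLinearMap.id ℝ X - (2:ℝ) • K m).comp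
            (ContinuousLinearMap.id ℝ X - (2:ℝ) • K n))‖
        ≤ 2⁻¹ * (1 + (1+ε') * (1+ε')) := by
      rw [norm_smul (2⁻¹:ℝ) (ContinuousLinearMap.id ℝ X
          + (ContinuousLinearMap.id ℝ X - (2:ℝ) • K m).comp
            (ContinuousLinearMap.id ℝ X - (2:ℝ) • K n))]
      have e2 : ‖ContinuousLinearMap.id ℝ X
          + (ContinuousLinearMap.id ℝ X - (2:ℝ) • K m).comp
            (ContinuousLinearMap.id ℝ X - (2:ℝ) • K n)‖ ≤ 1 + (1+ε') * (1+ε') := by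
        refine (norm_add_le _ _).trans ?_
        have e3 : ‖(ContinuousLinearMap.id ℝ X - (2:ℝ) • K m).comp
            (ContinuousLinearMap.id ℝ X - (2:ℝ) • K n)‖ ≤ (1+ε') * (1+ε') := by
          refine (ContinuousLinearMap.opNorm_comp_le _ _).trans ?_
          exact mul_le_mul hm2 hk1 (norm_nonneg _) (by linarith)
        have := ContinuousLinearMap.norm_id_le (E := X) (𝕜 := ℝ)
        linarith
      have : ‖(2⁻¹:ℝ)‖ = 2⁻¹ := by norm_num
      rw [this]
      linarith [e2]
    have e4 : ‖(2:ℝ) • (K m - (K m).comp (K n))‖ ≤ 2 * ε' := by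
      rw [norm_smul (2:ℝ) (K m - (K m).comp (K n))]
      have : ‖(2:ℝ)‖ = 2 := by norm_num
      rw [this]
      have e5 : ‖K m - (K m).comp (K n)‖ ≤ ε' := by rw [norm_sub_rev]; exact hk2
      linarith
    calc ‖(2⁻¹:ℝ) • (ContinuousLinearMap.id ℝ X
          + (ContinuousLinearMap.id ℝ X - (2:ℝ) • K m).comp
            (ContinuousLinearMap.id ℝ X - (2:ℝ) • K n))
          + (2:ℝ) • (K m - (K m).comp (K n))‖
        ≤ 2⁻¹ * (1 + (1+ε') * (1+ε')) + 2 * ε' := by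
          refine (norm_add_le _ _).trans ?_; linarith
      _ ≤ 1 + 4*ε' := by nlinarith [hε'1, hε'pos]
  -- the eventual bound on ‖x₀ ± w k‖
  have hpm : ∀ᶠ k in atTop, ‖x₀ + w k‖ ≤ 1 + 6*ε' ∧ ‖x₀ - w k‖ ≤ 1 + 6*ε' := by
    filter_upwards [hBminus, hBplus, hx₀ev] with k h1 h2 h3pre
    have h3 : ‖x₀ - K m (x (ρ k))‖ ≤ ε' := by rw [norm_sub_rev]; exact h3pre
    constructor
    · have hdec : x₀ + w k = (x₀ - K m (x (ρ k)))
          + (K m + ContinuousLinearMap.id ℝ X - K (φ (ρ k))) (x (ρ k)) := by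
        simp only [hwdef, hvdef, hudef, ContinuousLinearMap.add_apply,
          ContinuousLinearMap.sub_apply, ContinuousLinearMap.coe_id', id_eq]
        abel
      rw [hdec]
      calc ‖(x₀ - K m (x (ρ k)))
          + (K m + ContinuousLinearMap.id ℝ X - K (φ (ρ k))) (x (ρ k))‖
          ≤ ‖x₀ - K m (x (ρ k))‖
            + ‖(K m + ContinuousLinearMap.id ℝ X - K (φ (ρ k))) (x (ρ k))‖ :=
              norm_add_le _ _
        _ ≤ ε' + (1 + 4*ε') * 1 := by
            refine add_le_add h3 ?_
            calc ‖(K m + ContinuousLinearMap.id ℝ X - K (φ (ρ k))) (x (ρ k))‖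
                  ≤ ‖K m + ContinuousLinearMap.id ℝ X - K (φ (ρ k))‖ * ‖x (ρ k)‖ :=
                    ContinuousLinearMap.le_opNorm _ _
                _ ≤ (1 + 4*ε') * 1 := by
                    refine mul_le_mul h2 (hx1' _) (norm_nonneg _) (by linarith)
        _ ≤ 1 + 6*ε' := by linarith
    · have hdec : x₀ - w k = (x₀ - K m (x (ρ k)))
          + (K m + K (φ (ρ k)) - ContinuousLinearMap.id ℝ X) (x (ρ k)) := by
        simp only [hwdef, hvdef, hudef, ContinuousLinearMap.add_apply,
          ContinuousLinearMap.sub_apply, ContinuousLinearMap.coe_id', id_eq]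
        abel
      rw [hdec]
      calc ‖(x₀ - K m (x (ρ k)))
          + (K m + K (φ (ρ k)) - ContinuousLinearMap.id ℝ X) (x (ρ k))‖
          ≤ ‖x₀ - K m (x (ρ k))‖
            + ‖(K m + K (φ (ρ k)) - ContinuousLinearMap.id ℝ X) (x (ρ k))‖ :=
              norm_add_le _ _
        _ ≤ ε' + (1 + ε') * 1 := by
            refine add_le_add h3 ?_
            calc ‖(K m + K (φ (ρ k)) - ContinuousLinearMap.id ℝ X) (x (ρ k))‖
                  ≤ ‖K m + K (φ (ρ k)) - ContinuousLinearMap.id ℝ X‖ * ‖x (ρ k)‖ :=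
                    ContinuousLinearMap.le_opNorm _ _
                _ ≤ (1 + ε') * 1 := by
                    refine mul_le_mul h1 (hx1' _) (norm_nonneg _) (by linarith)
        _ ≤ 1 + 6*ε' := by linarith
  -- bound the RHS of (7)
  have hrhs7 : limsup (fun k => ((‖x₀ + w k‖^p + ‖x₀ - w k‖^p)/2) ^ (1/p)) atTop
      ≤ 1 + 6*ε' := by
    refine limsup_le_of_le ?_ ?_
    · refine isCoboundedUnder_le_of_le atTop (x := 0) ?_
      intro k
      refine Real.rpow_nonneg ?_ _
      have := Real.rpow_nonneg (norm_nonneg (x₀ + w k)) p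
      have := Real.rpow_nonneg (norm_nonneg (x₀ - w k)) p
      linarith
    · filter_upwards [hpm] with k hk
      obtain ⟨h1, h2⟩ := hk
      have hs0 : (0:ℝ) ≤ 1 + 6*ε' := by linarith
      have e1 : ‖x₀ + w k‖^p ≤ (1 + 6*ε')^p :=
        Real.rpow_le_rpow (norm_nonneg _) h1 (le_of_lt hp0)
      have e2 : ‖x₀ - w k‖^p ≤ (1 + 6*ε')^p :=
        Real.rpow_le_rpow (norm_nonneg _) h2 (le_of_lt hp0)
      have e3 : (‖x₀ + w k‖^p + ‖x₀ - w k‖^p)/2 ≤ (1 + 6*ε')^p := by linarith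
      have e4 : (0:ℝ) ≤ (‖x₀ + w k‖^p + ‖x₀ - w k‖^p)/2 := by
        have := Real.rpow_nonneg (norm_nonneg (x₀ + w k)) p
        have := Real.rpow_nonneg (norm_nonneg (x₀ - w k)) p
        linarith
      calc ((‖x₀ + w k‖^p + ‖x₀ - w k‖^p)/2) ^ (1/p)
          ≤ ((1 + 6*ε')^p) ^ (1/p) := Real.rpow_le_rpow e4 e3 (le_of_lt hip)
        _ = 1 + 6*ε' := by
            rw [← Real.rpow_mul hs0, mul_one_div, div_self hp0', Real.rpow_one]
  -- final chain
  have hchain : 1 + ε - 3*ε' ≤ 1 + 6*ε' := by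
    calc 1 + ε - 3*ε' ≤ limsup (fun k => ‖y₀ + T (w k)‖) atTop := hL1
      _ ≤ limsup (fun k => (‖y₀‖^p + ‖T (w k)‖^p) ^ (1/p)) atTop := hYb
      _ = (‖y₀‖^p + τ^p) ^ (1/p) := hL2
      _ ≤ (‖x₀‖^p + α^p) ^ (1/p) := hmono1
      _ = limsup (fun k => (‖x₀‖^p + ‖w k‖^p) ^ (1/p)) atTop := hL3.symm
      _ ≤ limsup (fun k => ((‖x₀ + w k‖^p + ‖x₀ - w k‖^p)/2) ^ (1/p)) atTop := h7ap
      _ ≤ 1 + 6*ε' := hrhs7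
  have : ε ≤ 9 * ε' := by linarith
  have : ε ≤ 9 * (ε/16) := le_trans this (by linarith)
  linarith

/-- ultrafilter limits of bounded real sequences exist -/
lemma ulim (U : Ultrafilter ℕ) (a : ℕ → ℝ) {c : ℝ} (h : ∀ n, |a n| ≤ c) :
    ∃ L, |L| ≤ c ∧ Tendsto a (U : Filter ℕ) (𝓝 L) := by
  have hle : (U.map a : Filter ℝ) ≤ Filter.principal (Set.Icc (-c) c) := by
    rw [Filter.le_principal_iff]
    have : ∀ n, a n ∈ Set.Icc (-c) c := fun n => abs_le.1 (h n)
    exact Filter.mem_map.2 (Filter.univ_mem' this)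
  obtain ⟨L, hL, hLe⟩ := isCompact_Icc.ultrafilter_le_nhds (U.map a) hle
  exact ⟨L, abs_le.2 hL, hLe⟩

set_option maxHeartbeats 1000000 in
/-- If `X` admits compact operators satisfying (a)–(c), inequality (7) holds for `X` and `p`,
and `Y` satisfies the upper `ℓ_p`-estimate for weakly null sequences, then
`K(X, Y)` is an M-ideal in `L(X, Y)`. -/
theorem mIdeal_compactOperator_of_ineq7_of_upper_estimate (p : ℝ) (hp : 1 < p)
    (X : Type*) [NormedAddCommGroup X] [NormedSpace ℝ X] [CompleteSpace X]
    (K : ℕ → X →L[ℝ] X) (hK : ABC K) (h7 : Ineq7 X p)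
    (Y : Type*) [NormedAddCommGroup Y] [NormedSpace ℝ Y] [CompleteSpace Y]
    (hY : ∀ (y : Y) (ys : ℕ → Y), WeaklyNull ys →
      limsup (fun n => ‖y + ys n‖) atTop ≤
      limsup (fun n => (‖y‖ ^ p + ‖ys n‖ ^ p) ^ (1 / p)) atTop) :
    IsMIdeal (compactOperator (RingHom.id ℝ) X Y) := by
  classical
  obtain ⟨hcomp, ha, hb, hc⟩ := hK
  set J : Submodule ℝ (X →L[ℝ] Y) := compactOperator (RingHom.id ℝ) X Y with hJ
  have hJmem : ∀ S : X →L[ℝ] Y, S ∈ J ↔ IsCompactOperator S := fun S => Iff.rfl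
  -- bound on ‖K n‖
  obtain ⟨M, hM⟩ : ∃ M, ∀ n, ‖ContinuousLinearMap.id ℝ X - (2:ℝ) • K n‖ ≤ M := by
    obtain ⟨M, hM⟩ := hc.bddAbove_range
    exact ⟨M, fun n => hM ⟨n, rfl⟩⟩
  set C : ℝ := (1 + M) / 2 with hCdef
  have hCK : ∀ n, ‖K n‖ ≤ C := by
    intro n
    have h2 : ContinuousLinearMap.id ℝ X - (ContinuousLinearMap.id ℝ X - (2:ℝ) • K n)
        = (2:ℝ) • K n := sub_sub_cancel _ _
    have h3 : ‖(2:ℝ) • K n‖ ≤ 1 + M := by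
      rw [← h2]
      refine (norm_sub_le _ _).trans ?_
      have := ContinuousLinearMap.norm_id_le (E := X) (𝕜 := ℝ)
      linarith [hM n]
    have h4 : ‖(2:ℝ) • K n‖ = 2 * ‖K n‖ := by
      rw [norm_smul (2:ℝ) (K n)]; norm_num
    rw [hCdef]; rw [h4] at h3; linarith
  have hC0 : 0 ≤ C := le_trans (norm_nonneg _) (hCK 0)
  -- compactness of T ∘ K n
  have hTKc : ∀ (T : X →L[ℝ] Y) n, IsCompactOperator (T.comp (K n)) := by
    intro T n
    have := (hcomp n).continuous_comp T.continuous
    exact this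
  have hTKn : ∀ (T : X →L[ℝ] Y) n, ‖T.comp (K n)‖ ≤ ‖T‖ * C :=
    fun T n => (T.opNorm_comp_le (K n)).trans
      (mul_le_mul_of_nonneg_left (hCK n) (norm_nonneg T))
  -- the ultrafilter
  set U : Ultrafilter ℕ := Ultrafilter.of atTop with hUdef
  have hU : (U : Filter ℕ) ≤ atTop := Ultrafilter.of_le _
  -- definition of P
  have hPdef : ∀ f : StrongDual ℝ (X →L[ℝ] Y), ∃ Pf : StrongDual ℝ (X →L[ℝ] Y),
      ∀ T, Tendsto (fun n => f (T.comp (K n))) (U : Filter ℕ) (𝓝 (Pf T)) := by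
    intro f
    have hex : ∀ T : X →L[ℝ] Y, ∃ L, |L| ≤ ‖f‖ * C * ‖T‖ ∧
        Tendsto (fun n => f (T.comp (K n))) (U : Filter ℕ) (𝓝 L) := by
      intro T
      apply ulim
      intro n
      calc |f (T.comp (K n))| ≤ ‖f‖ * ‖T.comp (K n)‖ := f.le_opNorm _
        _ ≤ ‖f‖ * (‖T‖ * C) := mul_le_mul_of_nonneg_left (hTKn T n) (norm_nonneg f)
        _ = ‖f‖ * C * ‖T‖ := by ring
    choose P0 hP0b hP0 using hex
    have hadd : ∀ T T', P0 (T + T') = P0 T + P0 T' := by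
      intro T T'
      refine tendsto_nhds_unique ?_ ((hP0 T).add (hP0 T'))
      have heq : (fun n => f ((T + T').comp (K n))) =
          fun n => f (T.comp (K n)) + f (T'.comp (K n)) := by
        funext n; rw [ContinuousLinearMap.add_comp, map_add]
      rw [← heq]
      exact hP0 (T + T')
    have hsmul : ∀ (c : ℝ) T, P0 (c • T) = c • P0 T := by
      intro c T
      refine tendsto_nhds_unique ?_ ((hP0 T).const_mul c)
      have heq : (fun n => f ((c • T).comp (K n))) =
          fun n => c * f (T.comp (K n)) := by
        funext n
        rw [ContinuousLinearMap.smul_comp]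
        show f (c • T.comp (K n)) = c * f (T.comp (K n))
        rw [_root_.map_smul, smul_eq_mul]
      rw [← heq]
      exact hP0 (c • T)
    refine ⟨LinearMap.mkContinuous ⟨⟨P0, hadd⟩, hsmul⟩ (‖f‖ * C) ?_, ?_⟩
    · intro T
      simpa using (hP0b T)
    · intro T
      exact hP0 T
  choose P hP using hPdef
  have mem_annih : ∀ g : StrongDual ℝ (X →L[ℝ] Y), g ∈ annih J ↔ ∀ x ∈ J, g x = 0 :=
    fun g => Iff.rfl
  -- P is linear
  have hPadd : ∀ f g, P (f + g) = P f + P g := by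
    intro f g
    ext T
    have h1 : Tendsto (fun n => (f + g) (T.comp (K n))) (U : Filter ℕ)
        (𝓝 (P f T + P g T)) := by
      have heq : (fun n => (f + g) (T.comp (K n))) =
          fun n => f (T.comp (K n)) + g (T.comp (K n)) := by
        funext n; rfl
      rw [heq]
      exact (hP f T).add (hP g T)
    have h2 := hP (f + g) T
    have h3 := tendsto_nhds_unique h2 h1
    simpa [ContinuousLinearMap.add_apply] using h3
  have hPsub : ∀ f g, P (f - g) = P f - P g := by
    intro f g
    ext T
    have h1 : Tendsto (fun n => (f - g) (T.comp (K n))) (U : Filter ℕ)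
        (𝓝 (P f T - P g T)) := by
      have heq : (fun n => (f - g) (T.comp (K n))) =
          fun n => f (T.comp (K n)) - g (T.comp (K n)) := by
        funext n; rfl
      rw [heq]
      exact (hP f T).sub (hP g T)
    have h3 := tendsto_nhds_unique (hP (f - g) T) h1
    simpa [ContinuousLinearMap.sub_apply] using h3
  have hPsmul : ∀ (c : ℝ) f, P (c • f) = c • P f := by
    intro c f
    ext T
    have h1 : Tendsto (fun n => (c • f) (T.comp (K n))) (U : Filter ℕ)
        (𝓝 (c * P f T)) := by
      have heq : (fun n => (c • f) (T.comp (K n))) =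
          fun n => c * f (T.comp (K n)) := by
        funext n; rfl
      rw [heq]
      exact (hP f T).const_mul c
    have h3 := tendsto_nhds_unique (hP (c • f) T) h1
    simpa [ContinuousLinearMap.smul_apply] using h3
  have hPnorm : ∀ f, ‖P f‖ ≤ ‖f‖ * C := by
    intro f
    refine ContinuousLinearMap.opNorm_le_bound _ (by positivity) ?_
    intro T
    have hev : ∀ n, ‖f (T.comp (K n))‖ ≤ ‖f‖ * C * ‖T‖ := by
      intro n
      calc ‖f (T.comp (K n))‖ ≤ ‖f‖ * ‖T.comp (K n)‖ := f.le_opNorm _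
        _ ≤ ‖f‖ * (‖T‖ * C) := mul_le_mul_of_nonneg_left (hTKn T n) (norm_nonneg f)
        _ = ‖f‖ * C * ‖T‖ := by ring
    have := le_of_tendsto (hP f T).norm (Filter.Eventually.of_forall hev)
    simpa using this
  -- P agrees with f on compact operators
  have hfS : ∀ (f : StrongDual ℝ (X →L[ℝ] Y)) (S : X →L[ℝ] Y), IsCompactOperator S →
      Tendsto (fun n => f (S.comp (K n))) (U : Filter ℕ) (𝓝 (f S)) := by
    intro f S hS
    have h1 : Tendsto (fun n => S.comp (K n)) atTop (𝓝 S) := by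
      rw [tendsto_iff_norm_sub_tendsto_zero]
      exact lemS2 K hCK hb S hS
    exact ((f.continuous.tendsto S).comp h1).mono_left hU
  have hPcompact : ∀ (f : StrongDual ℝ (X →L[ℝ] Y)) (S : X →L[ℝ] Y),
      IsCompactOperator S → P f S = f S := by
    intro f S hS
    exact tendsto_nhds_unique (hP f S) (hfS f S hS)
  have hPannih : ∀ g ∈ annih J, P g = 0 := by
    intro g hg
    ext T
    have h1 : Tendsto (fun n => g (T.comp (K n))) (U : Filter ℕ) (𝓝 0) := by
      have heq : (fun n => g (T.comp (K n))) = fun _ => (0 : ℝ) := by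
        funext n
        exact hg (T.comp (K n)) (hTKc T n)
      rw [heq]
      exact tendsto_const_nhds
    have := tendsto_nhds_unique (hP g T) h1
    simpa using this
  have hPidem : ∀ f, P (P f) = P f := by
    intro f
    ext T
    have h1 : Tendsto (fun m => (P f) (T.comp (K m))) (U : Filter ℕ) (𝓝 (P f T)) := by
      have heq : (fun m => (P f) (T.comp (K m))) = fun m => f (T.comp (K m)) := by
        funext m
        exact hPcompact f (T.comp (K m)) (hTKc T m)
      rw [heq]
      exact hP f T
    exact tendsto_nhds_unique (hP (P f) T) h1
  -- continuity of P
  have hPcont : Continuous P := by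
    have hlip : LipschitzWith (Real.toNNReal C) P := by
      apply LipschitzWith.of_dist_le_mul
      intro f g
      rw [dist_eq_norm, dist_eq_norm, ← hPsub]
      calc ‖P (f - g)‖ ≤ ‖f - g‖ * C := hPnorm _
        _ ≤ Real.toNNReal C * ‖f - g‖ := by
            rw [mul_comm]
            refine mul_le_mul_of_nonneg_right ?_ (ContinuousLinearMap.opNorm_nonneg _)
            exact le_of_eq (Real.coe_toNNReal C hC0).symm
    exact hlip.continuous
  -- the subspace V
  set V : Submodule ℝ (StrongDual ℝ (X →L[ℝ] Y)) :=
    { carrier := {h | P h = h}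
      add_mem' := by
        intro a b ha' hb'
        simp only [Set.mem_setOf_eq] at *
        rw [hPadd, ha', hb']
      zero_mem' := by
        simp only [Set.mem_setOf_eq]
        exact hPannih 0 (Submodule.zero_mem _)
      smul_mem' := by
        intro c a ha'
        simp only [Set.mem_setOf_eq] at *
        rw [hPsmul, ha'] } with hVdef
  have hVmem : ∀ h : StrongDual ℝ (X →L[ℝ] Y), h ∈ V ↔ P h = h := fun h => Iff.rfl
  -- basic inequality
  -- near-norming elements
  have hnorming : ∀ (φ : StrongDual ℝ (X →L[ℝ] Y)) (ε : ℝ), 0 < ε →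
      ∃ T : X →L[ℝ] Y, ‖T‖ ≤ 1 ∧ ‖φ‖ - ε ≤ φ T := by
    intro φ ε hε
    by_cases h0 : ‖φ‖ ≤ ε
    · exact ⟨0, by simp, by simp; linarith⟩
    · push_neg at h0
      obtain ⟨T₀, hT₀, hT₀v⟩ := φ.exists_lt_apply_of_lt_opNorm
        (r := ‖φ‖ - ε) (by linarith)
      rcases le_or_gt 0 (φ T₀) with hsgn | hsgn
      · refine ⟨T₀, le_of_lt hT₀, ?_⟩
        rw [Real.norm_eq_abs, abs_of_nonneg hsgn] at hT₀v
        linarith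
      · refine ⟨-T₀, by simpa using le_of_lt hT₀, ?_⟩
        rw [map_neg]
        rw [Real.norm_eq_abs, abs_of_neg hsgn] at hT₀v
        linarith
  -- eventual norm bound on K n
  have hKev : ∀ ε : ℝ, 0 < ε → ∀ᶠ n in atTop, ‖K n‖ ≤ 1 + ε := by
    intro ε hε
    have h2 := hc.eventually (eventually_lt_nhds (show (1:ℝ) < 1 + 2*ε by linarith))
    refine h2.mono fun n hn => ?_
    have ha2 : ContinuousLinearMap.id ℝ X - (ContinuousLinearMap.id ℝ X - (2:ℝ) • K n)
        = (2:ℝ) • K n := sub_sub_cancel _ _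
    have h3 : ‖(2:ℝ) • K n‖ ≤ 1 + (1 + 2*ε) := by
      rw [← ha2]
      refine (norm_sub_le _ _).trans ?_
      have := ContinuousLinearMap.norm_id_le (E := X) (𝕜 := ℝ)
      linarith
    have h4 : ‖(2:ℝ) • K n‖ = 2 * ‖K n‖ := by
      rw [norm_smul (2:ℝ) (K n)]; norm_num
    rw [h4] at h3; linarith
  have hbasic : ∀ f : StrongDual ℝ (X →L[ℝ] Y), ‖f - P f‖ + ‖P f‖ ≤ ‖f‖ := by
    intro f
    refine le_of_forall_pos_le_add ?_
    intro η hη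
    set D : ℝ := ‖f‖ + ‖P f‖ + 3 with hDdef
    have hD : 0 < D := by positivity
    set ε : ℝ := min (η / D) 1 with hεdef
    have hεpos : 0 < ε := lt_min (div_pos hη hD) one_pos
    have hε1 : ε ≤ 1 := min_le_right _ _
    have hεD : ε * D ≤ η := by
      have h1 : ε ≤ η / D := min_le_left _ _
      calc ε * D ≤ (η / D) * D := mul_le_mul_of_nonneg_right h1 (le_of_lt hD)
        _ = η := div_mul_cancel₀ η (ne_of_gt hD)
    obtain ⟨T, hT1, hTval⟩ := hnorming (f - P f) ε hεpos
    obtain ⟨T', hT'1, hT'val⟩ := hnorming (P f) (ε/2) (by linarith)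
    -- pick an index n₁
    have hUev1 : ∀ᶠ n in (U : Filter ℕ), ‖P f‖ - ε ≤ f (T'.comp (K n)) := by
      have h2 : ∀ᶠ n in (U : Filter ℕ), (P f) T' - ε/2 < f (T'.comp (K n)) :=
        (hP f T').eventually (eventually_gt_nhds (by linarith))
      exact h2.mono fun n hn => by linarith
    have hUev2 : ∀ᶠ n in (U : Filter ℕ), ‖K n‖ ≤ 1 + ε := (hKev ε hεpos).filter_mono hU
    obtain ⟨n₁, hn₁, hn₂⟩ := (hUev1.and hUev2).exists
    set S : X →L[ℝ] Y := ((1+ε)⁻¹ : ℝ) • (T'.comp (K n₁)) with hSdef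
    have hεpos1 : (0:ℝ) < 1 + ε := by linarith
    have hScomp : IsCompactOperator S := by
      have := (hTKc T' n₁).smul (((1+ε)⁻¹ : ℝ))
      exact this
    have hS1 : ‖S‖ ≤ 1 := by
      rw [hSdef, norm_smul ((1+ε)⁻¹:ℝ) (T'.comp (K n₁))]
      have h1 : ‖T'.comp (K n₁)‖ ≤ 1 + ε := by
        calc ‖T'.comp (K n₁)‖ ≤ ‖T'‖ * ‖K n₁‖ := T'.opNorm_comp_le _
          _ ≤ 1 * (1 + ε) := mul_le_mul hT'1 hn₂ (norm_nonneg _) zero_le_one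
          _ = 1 + ε := one_mul _
      have h2 : ‖((1+ε)⁻¹ : ℝ)‖ = (1+ε)⁻¹ := by
        rw [Real.norm_eq_abs, abs_of_pos (by positivity)]
      rw [h2]
      calc (1+ε)⁻¹ * ‖T'.comp (K n₁)‖ ≤ (1+ε)⁻¹ * (1+ε) :=
            mul_le_mul_of_nonneg_left h1 (by positivity)
        _ = 1 := inv_mul_cancel₀ (ne_of_gt hεpos1)
    have hSval : ‖P f‖ - ε * (1 + ‖P f‖) ≤ f S := by
      have h1 : f S = (1+ε)⁻¹ * f (T'.comp (K n₁)) := by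
        rw [hSdef, _root_.map_smul, smul_eq_mul]
      rw [h1]
      rw [inv_mul_eq_div, le_div_iff₀ hεpos1]
      have h2 : ‖P f‖ - ε ≤ f (T'.comp (K n₁)) := hn₁
      have h3 : 0 ≤ ‖P f‖ := ContinuousLinearMap.opNorm_nonneg _
      nlinarith [sq_nonneg ε]
    -- the core estimate
    have hRcore :=
      lemCore p hp K ⟨hcomp, ha, hb, hc⟩ h7 hY T S hT1 hS1 hScomp hεpos
    have hUR : ∀ᶠ n in (U : Filter ℕ),
        f (T - T.comp (K n) + S.comp (K n)) ≤ ‖f‖ * (1 + ε) := by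
      refine (hRcore.filter_mono hU).mono fun n hn => ?_
      calc f (T - T.comp (K n) + S.comp (K n))
          ≤ |f (T - T.comp (K n) + S.comp (K n))| := le_abs_self _
        _ ≤ ‖f‖ * ‖T - T.comp (K n) + S.comp (K n)‖ := f.le_opNorm _
        _ ≤ ‖f‖ * (1 + ε) := mul_le_mul_of_nonneg_left hn (norm_nonneg f)
    have hRt : Tendsto (fun n => f (T - T.comp (K n) + S.comp (K n)))
        (U : Filter ℕ) (𝓝 (f T - P f T + f S)) := by
      have h1 : (fun n => f (T - T.comp (K n) + S.comp (K n))) =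
          fun n => f T - f (T.comp (K n)) + f (S.comp (K n)) := by
        funext n; rw [map_add, map_sub]
      rw [h1]
      exact (tendsto_const_nhds.sub (hP f T)).add (hfS f S hScomp)
    have hfin : f T - P f T + f S ≤ ‖f‖ * (1 + ε) := le_of_tendsto hRt hUR
    have hTv : ‖f - P f‖ - ε ≤ f T - P f T := by
      have : (f - P f) T = f T - P f T := rfl
      linarith [this ▸ hTval]
    have hεf : ε * ‖f‖ + ε * (2 + ‖P f‖) ≤ η := by
      have : ε * (‖f‖ + ‖P f‖ + 3) ≤ η := by
        calc ε * (‖f‖ + ‖P f‖ + 3) = ε * D := by rw [hDdef]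
          _ ≤ η := hεD
      nlinarith
    linarith
  refine ⟨V, ?_, ?_, ?_, ?_⟩
  · have : (V : Set (StrongDual ℝ (X →L[ℝ] Y))) = {h | P h = h} := rfl
    rw [this]
    exact isClosed_eq hPcont continuous_id
  · intro f
    refine ⟨f - P f, ?_, P f, hPidem f, by abel⟩
    intro S hS
    have h1 : P f S = f S := hPcompact f S hS
    simp [ContinuousLinearMap.sub_apply, h1]
  · rw [Submodule.eq_bot_iff]
    intro g hg
    have h1 : P g = g := hg.2
    have h2 : P g = 0 := hPannih g hg.1
    rw [← h1, h2]
  · intro g hg h hh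
    refine le_antisymm (norm_add_le _ _) ?_
    have h1 : P (g + h) = h := by
      rw [hPadd, hPannih g hg, hh, zero_add]
    have h2 := hbasic (g + h)
    rw [h1] at h2
    have h3 : g + h - h = g := by abel
    rw [h3] at h2
    exact h2
end
end

section
/- For 1 ≤ p < ∞, for every y ∈ ℓ_p and every weakly null sequence (y_n) in ℓ_p one has limsup_n ‖y + y_n‖ = limsup_n (‖y‖^p + ‖y_n‖^p)^{1/p}. -/
open Filter Topology NormedSpace ENNReal MeasureTheory

noncomputable section

/-!
Cut `y` off outside a finite set `s` of coordinates on which it carries all but a small part of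
its norm. Weak nullity in `ℓ_p` gives coordinatewise convergence, so for large `n` the part of
`yₙ` on `s` is small as well. Up to these two small pieces, `y + yₙ` is the sum of `y` restricted
to `s` and `yₙ` restricted to the complement of `s`; these have disjoint supports, so `‖·‖^p` is
additive on them. Hence `‖y + yₙ‖ - (‖y‖^p + ‖yₙ‖^p)^{1/p} → 0`, and both sequences are bounded
because weakly null sequences are (uniform boundedness).
-/

theorem WeaklyNull.exists_norm_le {X : Type*} [NormedAddCommGroup X] [NormedSpace ℝ X]
    {xs : ℕ → X} (h : WeaklyNull xs) : ∃ C, ∀ n, ‖xs n‖ ≤ C := by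
  obtain ⟨C, hC⟩ := banach_steinhaus (g := fun n => inclusionInDoubleDualLi ℝ (xs n))
    fun f => by
      obtain ⟨c, hc⟩ := (h f).norm.bddAbove_range
      exact ⟨c, fun n => hc ⟨n, rfl⟩⟩
  exact ⟨C, fun n => by simpa only [LinearIsometry.norm_map] using hC n⟩

theorem Filter.limsup_eq_of_tendsto_sub {α ι : Type*} [AddCommGroup α]
    [ConditionallyCompleteLinearOrder α] [DenselyOrdered α] [AddLeftMono α] [TopologicalSpace α]
    [OrderTopology α] [IsTopologicalAddGroup α] {l : Filter ι} [l.NeBot] {u v : ι → α}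
    (hu : IsBoundedUnder (· ≤ ·) l u) (hu' : IsBoundedUnder (· ≥ ·) l u)
    (h : Tendsto (u - v) l (𝓝 0)) : limsup u l = limsup v l := by
  have hw : Tendsto (v - u) l (𝓝 0) := by simpa [Pi.sub_def] using h.neg
  have hv : v = u + (v - u) := by abel
  rw [hv]
  apply le_antisymm
  · calc limsup u l = limsup u l + liminf (v - u) l := by rw [hw.liminf_eq, add_zero]
      _ ≤ limsup (u + (v - u)) l :=
        le_limsup_add hu hu'.isCoboundedUnder_le hw.isBoundedUnder_le hw.isBoundedUnder_ge
  · calc limsup (u + (v - u)) l ≤ limsup u l + limsup (v - u) l :=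
        limsup_add_le hu' hu hw.isBoundedUnder_ge.isCoboundedUnder_le hw.isBoundedUnder_le
      _ = limsup u l := by rw [hw.limsup_eq, add_zero]

theorem abs_rpow_add_rpow_rpow_inv_sub_le {q a b : ℝ} (hq : 1 ≤ q) (ha : 0 ≤ a) (hb : 0 ≤ b) :
    |(a ^ q + b ^ q) ^ (1 / q) - a| ≤ b := by
  have hq₀ : 0 < q := one_pos.trans_le hq
  have h_lower : a ≤ (a ^ q + b ^ q) ^ (1 / q) :=
    calc a = (a ^ q) ^ (1 / q) := by rw [one_div, Real.rpow_rpow_inv ha hq₀.ne']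
      _ ≤ (a ^ q + b ^ q) ^ (1 / q) := by gcongr; exact le_add_of_nonneg_right (by positivity)
  rw [abs_sub_le_iff]
  constructor
  · linarith [Real.rpow_add_rpow_le_add ha hb hq]
  · linarith

theorem abs_norm_add_sub_rpow_norm_le_two_mul {E : Type*} [SeminormedAddCommGroup E] {q : ℝ}
    (hq : 1 ≤ q) (a b : E) :
    |‖a + b‖ - (‖a‖ ^ q + ‖b‖ ^ q) ^ (1 / q)| ≤ 2 * ‖b‖ :=
  calc |‖a + b‖ - (‖a‖ ^ q + ‖b‖ ^ q) ^ (1 / q)|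
      ≤ |‖a + b‖ - ‖a‖| + |(‖a‖ ^ q + ‖b‖ ^ q) ^ (1 / q) - ‖a‖| := by
        rw [abs_sub_comm ((‖a‖ ^ q + ‖b‖ ^ q) ^ (1 / q)) ‖a‖]; exact abs_sub_le _ _ _
    _ ≤ ‖b‖ + ‖b‖ := by
      gcongr
      · simpa using abs_norm_sub_norm_le (a + b) a
      · exact abs_rpow_add_rpow_rpow_inv_sub_le hq (norm_nonneg a) (norm_nonneg b)
    _ = 2 * ‖b‖ := by ring

namespace lp

variable {α : Type*} [DecidableEq α] {E : α → Type*} [∀ i, NormedAddCommGroup (E i)]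
  {p : ℝ≥0∞}

def restrict (s : Finset α) (f : lp E p) : lp E p :=
  ∑ i ∈ s, lp.single p i (f i)

theorem restrict_apply (s : Finset α) (f : lp E p) (i : α) :
    restrict s f i = if i ∈ s then f i else 0 := by
  rw [restrict, coeFn_sum, Finset.sum_apply]
  simp [lp.single_apply]

theorem norm_rpow_eq_norm_restrict_rpow_add (hp : 0 < p.toReal) (s : Finset α) (f : lp E p) :
    ‖f‖ ^ p.toReal = ‖restrict s f‖ ^ p.toReal + ‖f - restrict s f‖ ^ p.toReal := by
  rw [restrict, lp.norm_sum_single hp, lp.norm_compl_sum_single hp]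
  ring

theorem norm_restrict_add_sub_restrict_rpow (hp : 0 < p.toReal) (s : Finset α) (f g : lp E p) :
    ‖restrict s f + (g - restrict s g)‖ ^ p.toReal =
      ‖restrict s f‖ ^ p.toReal + ‖g - restrict s g‖ ^ p.toReal := by
  set w := restrict s f + (g - restrict s g)
  -- `w` agrees with `f` on `s` and with `g` off `s`
  have hw : restrict s w = restrict s f :=
    Finset.sum_congr rfl fun i hi => by simp [w, restrict_apply, hi]
  have hw' : w - restrict s w = g - restrict s g := by rw [hw]; simp only [w]; abel
  rw [norm_rpow_eq_norm_restrict_rpow_add hp s w, hw', hw]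

variable [Fact (1 ≤ p)]

theorem tendsto_norm_sub_restrict (hp : p ≠ ∞) (f : lp E p) :
    Tendsto (fun s => ‖f - restrict s f‖) atTop (𝓝 0) := by
  simpa [norm_sub_rev, restrict] using tendsto_iff_norm_sub_tendsto_zero.1 (lp.hasSum_single hp f)

theorem tendsto_norm_restrict_of_tendsto_apply {ι : Type*} {l : Filter ι} {fs : ι → lp E p}
    (h : ∀ i, Tendsto (fun n => fs n i) l (𝓝 0)) (s : Finset α) :
    Tendsto (fun n => ‖restrict s (fs n)‖) l (𝓝 0) := by
  have : Tendsto (fun n => restrict s (fs n)) l (𝓝 0) := by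
    simpa [restrict] using tendsto_finsetSum s fun i _ =>
      ((isometry_single (E := E) (p := p) i).continuous.tendsto 0).comp (h i)
  simpa using this.norm

theorem abs_norm_add_sub_rpow_norm_le (hp : p ≠ ∞) (s : Finset α) (f g : lp E p) :
    |‖f + g‖ - (‖f‖ ^ p.toReal + ‖g‖ ^ p.toReal) ^ (1 / p.toReal)| ≤
      2 * (‖f - restrict s f‖ + ‖restrict s g‖) := by
  have hq : 1 ≤ p.toReal := by simpa using ENNReal.toReal_mono hp (Fact.out : 1 ≤ p)
  have hq₀ : 0 < p.toReal := one_pos.trans_le hq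
  -- regroup `f + g` into a part with disjoint supports and a small remainder
  set a := restrict s f + (g - restrict s g)
  set b := restrict s g + (f - restrict s f)
  have hfg : f + g = a + b := by simp only [a, b]; abel
  have hab : ‖f‖ ^ p.toReal + ‖g‖ ^ p.toReal = ‖a‖ ^ p.toReal + ‖b‖ ^ p.toReal := by
    rw [norm_restrict_add_sub_restrict_rpow hq₀, norm_restrict_add_sub_restrict_rpow hq₀,
      norm_rpow_eq_norm_restrict_rpow_add hq₀ s f, norm_rpow_eq_norm_restrict_rpow_add hq₀ s g]
    ring
  calc _ ≤ 2 * ‖b‖ := by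
        rw [hfg, hab]; exact abs_norm_add_sub_rpow_norm_le_two_mul hq a b
    _ ≤ 2 * (‖f - restrict s f‖ + ‖restrict s g‖) := by
        rw [add_comm (‖f - restrict s f‖)]; gcongr; exact norm_add_le _ _

theorem tendsto_norm_add_sub_rpow_norm (hp : p ≠ ∞) (f : lp E p) {ι : Type*} {l : Filter ι}
    {gs : ι → lp E p} (h : ∀ i, Tendsto (fun n => gs n i) l (𝓝 0)) :
    Tendsto (fun n => ‖f + gs n‖ - (‖f‖ ^ p.toReal + ‖gs n‖ ^ p.toReal) ^ (1 / p.toReal)) l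
      (𝓝 0) := by
  rw [Metric.tendsto_nhds]
  intro ε hε
  obtain ⟨s, hs⟩ :=
    ((tendsto_norm_sub_restrict hp f).eventually (gt_mem_nhds (by positivity : 0 < ε / 4))).exists
  filter_upwards [(tendsto_norm_restrict_of_tendsto_apply h s).eventually
    (gt_mem_nhds (by positivity : 0 < ε / 4))] with n hn
  rw [Real.dist_eq, sub_zero]
  linarith [abs_norm_add_sub_rpow_norm_le hp s f (gs n)]

end lp

/-- For `1 ≤ p < ∞`, for every `y ∈ ℓ_p` and every weakly null sequence `(yₙ)` in `ℓ_p`,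
`limsup ‖y + yₙ‖ = limsup (‖y‖^p + ‖yₙ‖^p)^{1/p}`. -/
theorem lp_limsup_eq (p : ℝ≥0∞) [Fact (1 ≤ p)] (hp : p ≠ ∞) :
    ∀ (y : lp (fun _ : ℕ => ℝ) p) (ys : ℕ → lp (fun _ : ℕ => ℝ) p), WeaklyNull ys →
      limsup (fun n => ‖y + ys n‖) atTop =
      limsup (fun n => (‖y‖ ^ p.toReal + ‖ys n‖ ^ p.toReal) ^ (1 / p.toReal)) atTop := by
  intro y ys hys
  obtain ⟨C, hC⟩ := hys.exists_norm_le
  have hcoord (i : ℕ) : Tendsto (fun n => ys n i) atTop (𝓝 0) := hys (lp.evalCLM ℝ _ p i)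
  refine limsup_eq_of_tendsto_sub ?_ ?_ (lp.tendsto_norm_add_sub_rpow_norm hp y hcoord)
  · exact isBoundedUnder_of ⟨‖y‖ + C, fun n => (norm_add_le _ _).trans (by linarith [hC n])⟩
  · exact isBoundedUnder_of ⟨0, fun n => norm_nonneg _⟩

end
end

section
/- Let 1 < p < ∞ and let X be a Banach space satisfying the two-point Clarkson-type inequality ‖u‖^p + ‖v‖^p ≤ (‖u + v‖^p + ‖u − v‖^p)/2 for all u, v ∈ X, and admitting a sequence of compact operators (K_n) on X satisfying conditions (a)–(c). Then K(X, ℓ_p) is an M-ideal in L(X, ℓ_p). -/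
open Filter Topology NormedSpace ENNReal MeasureTheory

noncomputable section

namespace MIdealAux
set_option linter.unusedSectionVars false
set_option maxHeartbeats 1000000

set_option linter.unusedSectionVars false
set_option maxHeartbeats 1000000


variable {p : ℝ≥0∞} [Fact (1 ≤ p)]

theorem p_ne_zero : p ≠ 0 := fun h => by
  have : (1:ℝ≥0∞) ≤ p := Fact.out
  simp [h] at this

theorem toReal_pos (hp' : p ≠ ∞) : 0 < p.toReal :=
  ENNReal.toReal_pos p_ne_zero hp'

/-- Norm comparison from coordinatewise comparison. -/
theorem norm_le_norm_of_coord (hp' : p ≠ ∞) {y z : lp (fun _ : ℕ => ℝ) p}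
    (h : ∀ i, ‖(y : ∀ _, ℝ) i‖ ≤ ‖(z : ∀ _, ℝ) i‖) : ‖y‖ ≤ ‖z‖ := by
  have ht : 0 < p.toReal := toReal_pos hp'
  rw [← Real.rpow_le_rpow_iff (norm_nonneg _) (norm_nonneg _) ht,
    lp.norm_rpow_eq_tsum ht, lp.norm_rpow_eq_tsum ht]
  refine Summable.tsum_le_tsum (fun i => ?_) ((lp.memℓp y).summable ht) ((lp.memℓp z).summable ht)
  exact Real.rpow_le_rpow (norm_nonneg _) (h i) ht.le

/-- The linear truncation map. -/
def QopL (p : ℝ≥0∞) (m : ℕ) :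
    lp (fun _ : ℕ => ℝ) p →ₗ[ℝ] lp (fun _ : ℕ => ℝ) p where
  toFun y := ∑ i ∈ Finset.range m, lp.single p i ((y : ∀ _, ℝ) i)
  map_add' y z := by
    rw [← Finset.sum_add_distrib]
    refine Finset.sum_congr rfl fun i _ => ?_
    refine lp.ext (funext fun j => ?_)
    by_cases hj : j = i
    · subst hj
      simp [lp.single_apply_self, lp.coeFn_add]
    · simp [lp.single_apply_ne p i _ hj, lp.coeFn_add,
        lp.single_apply_ne (E := fun _ : ℕ => ℝ) p i _ hj]
  map_smul' c y := by
    simp only [RingHom.id_apply]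
    rw [Finset.smul_sum]
    refine Finset.sum_congr rfl fun i _ => ?_
    have : (↑(c • y) : ∀ _, ℝ) i = c • (y : ∀ _, ℝ) i := by
      rw [lp.coeFn_smul]; rfl
    rw [this, lp.single_smul]

theorem QopL_apply_coord (m : ℕ) (y : lp (fun _ : ℕ => ℝ) p) (i : ℕ) :
    (QopL p m y : ∀ _, ℝ) i = if i < m then (y : ∀ _, ℝ) i else 0 := by
  have : (QopL p m y : ∀ _, ℝ) i
      = ∑ j ∈ Finset.range m, (lp.single p j ((y : ∀ _, ℝ) j) : ∀ _, ℝ) i := by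
    rw [QopL]; simp only [LinearMap.coe_mk, AddHom.coe_mk, lp.coeFn_sum, Finset.sum_apply]
  rw [this]
  have h2 : ∀ j ∈ Finset.range m,
      (lp.single p j ((y : ∀ _, ℝ) j) : ∀ _, ℝ) i = if j = i then (y : ∀ _, ℝ) i else 0 := by
    intro j _
    by_cases hj : i = j
    · subst hj; simp [lp.single_apply_self]
    · rw [lp.single_apply_ne p j _ hj, if_neg (fun h => hj h.symm)]
  rw [Finset.sum_congr rfl h2, Finset.sum_ite_eq' (Finset.range m) i (fun _ => (y : ∀ _, ℝ) i)]
  simp [Finset.mem_range]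

theorem norm_QopL_le (hp' : p ≠ ∞) (m : ℕ) (y : lp (fun _ : ℕ => ℝ) p) :
    ‖QopL p m y‖ ≤ ‖y‖ := by
  refine norm_le_norm_of_coord hp' fun i => ?_
  rw [QopL_apply_coord]
  by_cases h : i < m
  · rw [if_pos h]
  · rw [if_neg h]; simp

/-- Truncation as a continuous linear map. -/
def Qop (p : ℝ≥0∞) [Fact (1 ≤ p)] (hp' : p ≠ ∞) (m : ℕ) :
    lp (fun _ : ℕ => ℝ) p →L[ℝ] lp (fun _ : ℕ => ℝ) p :=
  LinearMap.mkContinuous (QopL p m) 1 fun y => by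
    rw [one_mul]; exact norm_QopL_le hp' m y

theorem Qop_apply_coord (hp' : p ≠ ∞) (m : ℕ) (y : lp (fun _ : ℕ => ℝ) p) (i : ℕ) :
    (Qop p hp' m y : ∀ _, ℝ) i = if i < m then (y : ∀ _, ℝ) i else 0 :=
  QopL_apply_coord m y i

theorem norm_Qop_le (hp' : p ≠ ∞) (m : ℕ) : ‖Qop p hp' m‖ ≤ 1 :=
  ContinuousLinearMap.opNorm_le_bound _ zero_le_one fun y => by
    rw [one_mul]; exact norm_QopL_le hp' m y

theorem norm_sub_Qop_le (hp' : p ≠ ∞) (m : ℕ) (y : lp (fun _ : ℕ => ℝ) p) :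
    ‖y - Qop p hp' m y‖ ≤ ‖y‖ := by
  refine norm_le_norm_of_coord hp' fun i => ?_
  rw [lp.coeFn_sub, Pi.sub_apply, Qop_apply_coord]
  by_cases h : i < m
  · rw [if_pos h]; simp
  · rw [if_neg h]; simp

theorem tendsto_Qop (hp' : p ≠ ∞) (y : lp (fun _ : ℕ => ℝ) p) :
    Tendsto (fun m => Qop p hp' m y) atTop (𝓝 y) := by
  have := (lp.hasSum_single hp' y).tendsto_sum_nat
  convert this using 2
  rfl


set_option linter.unusedSectionVars false

variable {p : ℝ≥0∞} [Fact (1 ≤ p)]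

theorem p_ne_zero' : p ≠ 0 := fun h => by
  have : (1:ℝ≥0∞) ≤ p := Fact.out
  simp [h] at this

/-- Coordinate evaluation as a continuous linear functional on `ℓ_p`. -/
def coordCLM (p : ℝ≥0∞) [Fact (1 ≤ p)] (i : ℕ) : lp (fun _ : ℕ => ℝ) p →L[ℝ] ℝ :=
  LinearMap.mkContinuous
    { toFun := fun y => (y : ∀ _, ℝ) i
      map_add' := fun y z => by simp [lp.coeFn_add]
      map_smul' := fun c y => by simp [lp.coeFn_smul] } 1
    fun y => by
      rw [one_mul]
      exact lp.norm_apply_le_norm (p_ne_zero' (p := p)) y i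

@[simp] theorem coordCLM_apply (i : ℕ) (y : lp (fun _ : ℕ => ℝ) p) :
    coordCLM p i y = (y : ∀ _, ℝ) i := rfl

/-- A rank-one operator is compact. -/
theorem isCompactOperator_rankOne {X Y : Type*} [NormedAddCommGroup X] [NormedSpace ℝ X]
    [NormedAddCommGroup Y] [NormedSpace ℝ Y] (f : X →L[ℝ] ℝ) (e : Y) :
    IsCompactOperator (fun x => f x • e) := by
  refine ⟨(fun c : ℝ => c • e) '' Set.Icc (-(‖f‖+1)) (‖f‖+1),
    (isCompact_Icc.image (by continuity)), ?_⟩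
  refine mem_of_superset (Metric.ball_mem_nhds 0 one_pos) (fun x hx => ?_)
  refine ⟨f x, ?_, rfl⟩
  · have hb : ‖f x‖ ≤ ‖f‖ * ‖x‖ := f.le_opNorm x
    have hx1 : ‖x‖ < 1 := by simpa using hx
    have : |f x| ≤ ‖f‖ + 1 := by
      have h0 : ‖f‖ * ‖x‖ ≤ ‖f‖ * 1 :=
        mul_le_mul_of_nonneg_left hx1.le (norm_nonneg f)
      have := hb.trans h0
      rw [Real.norm_eq_abs] at this
      linarith
    exact Set.mem_Icc.2 (abs_le.1 this)


theorem isCompactOperator_sum_rankOne {X Y : Type*} [NormedAddCommGroup X] [NormedSpace ℝ X]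
    [NormedAddCommGroup Y] [NormedSpace ℝ Y] (s : Finset ℕ) (f : ℕ → (X →L[ℝ] ℝ)) (e : ℕ → Y) :
    IsCompactOperator (fun x => ∑ i ∈ s, f i x • e i) := by
  classical
  induction s using Finset.induction_on with
  | empty => simpa [Pi.zero_def] using (isCompactOperator_zero (M₁ := X) (M₂ := Y))
  | @insert a s ha ih =>
    have : (fun x => ∑ i ∈ insert a s, f i x • e i)
        = (fun x => f a x • e a) + (fun x => ∑ i ∈ s, f i x • e i) := by
      funext x; simp [Finset.sum_insert ha]
    rw [this]
    exact (isCompactOperator_rankOne (f a) (e a)).add ih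

theorem Qop_eq_sum (hp' : p ≠ ∞) (m : ℕ) (y : lp (fun _ : ℕ => ℝ) p) :
    Qop p hp' m y = ∑ i ∈ Finset.range m, lp.single p i ((y : ∀ _, ℝ) i) := rfl

theorem single_sub (p : ℝ≥0∞) (i : ℕ) (a b : ℝ) :
    lp.single (E := fun _ : ℕ => ℝ) p i (a - b) = lp.single p i a - lp.single p i b := by
  refine lp.ext (funext fun j => ?_)
  by_cases hj : j = i
  · subst hj
    simp [lp.single_apply_self, lp.coeFn_sub]
  · simp [lp.single_apply_ne p i _ hj, lp.coeFn_sub,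
      lp.single_apply_ne (E := fun _ : ℕ => ℝ) p i _ hj]

theorem isCompactOperator_Qop (hp' : p ≠ ∞) (m : ℕ) :
    IsCompactOperator ⇑(Qop p hp' m) := by
  have heq : ⇑(Qop p hp' m)
      = fun y => ∑ i ∈ Finset.range m, (coordCLM p i y) • lp.single p i (1:ℝ) := by
    funext y
    rw [Qop_eq_sum]
    refine Finset.sum_congr rfl fun i _ => ?_
    rw [coordCLM_apply]
    have : (y : ∀ _, ℝ) i = ((y : ∀ _, ℝ) i) • (1:ℝ) := by simp
    rw [this, lp.single_smul]
    simp
  rw [heq]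
  exact isCompactOperator_sum_rankOne (Finset.range m) (fun i => coordCLM p i)
    (fun i => lp.single p i (1:ℝ))
variable {X : Type*} [NormedAddCommGroup X] [NormedSpace ℝ X]


/-- `(Id - Q_m) ∘ S → 0` in operator norm, for `S` compact. -/
theorem tendsto_sub_Qop_comp (hp' : p ≠ ∞) (S : X →L[ℝ] lp (fun _ : ℕ => ℝ) p)
    (hS : IsCompactOperator ⇑S) :
    Tendsto (fun m => ‖S - (Qop p hp' m).comp S‖) atTop (𝓝 0) := by
  rw [Metric.tendsto_atTop]
  intro ε hε
  obtain ⟨M, hM, hnhds⟩ := hS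
  obtain ⟨δ, hδ, hball⟩ := Metric.mem_nhds_iff.1 hnhds
  set ρ := ε * δ / 8 with hρdef
  have hρ : 0 < ρ := by positivity
  obtain ⟨t, htfin, hcover⟩ := Metric.totallyBounded_iff.1 hM.totallyBounded ρ hρ
  have hev : ∀ᶠ m in atTop, ∀ y ∈ t, ‖y - Qop p hp' m y‖ < ρ := by
    rw [eventually_all_finite htfin]
    intro y _
    have h1 : Tendsto (fun m => ‖y - Qop p hp' m y‖) atTop (𝓝 0) := by
      have := (tendsto_Qop hp' y)
      rw [tendsto_iff_norm_sub_tendsto_zero] at this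
      simpa [norm_sub_rev] using this
    exact (h1.eventually (eventually_lt_nhds hρ)).mono (fun m hm => by simpa using hm)
  obtain ⟨N, hN⟩ := eventually_atTop.1 hev
  refine ⟨N, fun m hm => ?_⟩
  have key : ‖S - (Qop p hp' m).comp S‖ ≤ ε / 2 := by
    refine ContinuousLinearMap.opNorm_le_of_shell (ε := δ) hδ (by positivity)
      (c := (2:ℝ)) (by norm_num) ?_
    intro x hx1 hx2
    have hx1' : δ / 2 ≤ ‖x‖ := by simpa using hx1
    have hSx : S x ∈ M := hball (by simpa [Metric.mem_ball, dist_zero_right] using hx2)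
    obtain ⟨y, hyt, hy⟩ := Set.mem_iUnion₂.1 (hcover hSx)
    have hy' : ‖S x - y‖ < ρ := by
      rw [Metric.mem_ball, dist_eq_norm] at hy
      exact hy
    have expand : (S - (Qop p hp' m).comp S) x
        = ((S x - y) - Qop p hp' m (S x - y)) + (y - Qop p hp' m y) := by
      simp only [ContinuousLinearMap.sub_apply, ContinuousLinearMap.comp_apply, map_sub]
      abel
    have hbound : ‖(S - (Qop p hp' m).comp S) x‖ ≤ 2 * ρ := by
      rw [expand]
      calc ‖((S x - y) - Qop p hp' m (S x - y)) + (y - Qop p hp' m y)‖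
          ≤ ‖(S x - y) - Qop p hp' m (S x - y)‖ + ‖y - Qop p hp' m y‖ := norm_add_le _ _
        _ ≤ ‖S x - y‖ + ‖y - Qop p hp' m y‖ := by
            have := norm_sub_Qop_le hp' m (S x - y); linarith
        _ ≤ ρ + ρ := by
            have := hN m hm y hyt; linarith
        _ = 2 * ρ := by ring
    have : 2 * ρ ≤ ε / 2 * ‖x‖ := by
      rw [hρdef]
      calc 2 * (ε * δ / 8) = ε / 2 * (δ / 2) := by ring
        _ ≤ ε / 2 * ‖x‖ := by
            refine mul_le_mul_of_nonneg_left hx1' (by positivity)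
    exact hbound.trans this
  have : dist ‖S - (Qop p hp' m).comp S‖ 0 = ‖S - (Qop p hp' m).comp S‖ := by
    rw [dist_zero_right, Real.norm_eq_abs, abs_of_nonneg (norm_nonneg _)]
  rw [this]
  exact key.trans_lt (by linarith)

/-- `S ∘ K_n → S` in operator norm, for `S` compact, using condition (b). -/
theorem tendsto_comp_K (hp' : p ≠ ∞) (K : ℕ → X →L[ℝ] X) {C : ℝ} (hC0 : 0 ≤ C)
    (hC : ∀ n, ‖K n‖ ≤ C)
    (hb : ∀ f : X →L[ℝ] ℝ, Tendsto (fun n => f.comp (K n)) atTop (𝓝 f))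
    (S : X →L[ℝ] lp (fun _ : ℕ => ℝ) p) (hS : IsCompactOperator ⇑S) :
    Tendsto (fun n => ‖S.comp (K n) - S‖) atTop (𝓝 0) := by
  rw [Metric.tendsto_atTop]
  intro ε hε
  set ε' := ε / (4 * (C + 1)) with hε'def
  have hε' : 0 < ε' := by positivity
  -- choose m with ‖S - Q_m S‖ ≤ ε'
  obtain ⟨m, hm⟩ : ∃ m, ‖S - (Qop p hp' m).comp S‖ ≤ ε' := by
    have := Metric.tendsto_atTop.1 (tendsto_sub_Qop_comp hp' S hS) ε' hε'
    obtain ⟨N, hN⟩ := this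
    refine ⟨N, ?_⟩
    have := hN N le_rfl
    rw [dist_zero_right, Real.norm_eq_abs, abs_of_nonneg (norm_nonneg _)] at this
    exact this.le
  set f : ℕ → (X →L[ℝ] ℝ) := fun i => (coordCLM p i).comp S with hfdef
  -- the middle term estimate
  have mid : ∀ n, ‖((Qop p hp' m).comp S).comp (K n) - (Qop p hp' m).comp S‖
      ≤ ∑ i ∈ Finset.range m, ‖(f i).comp (K n) - f i‖ := by
    intro n
    refine ContinuousLinearMap.opNorm_le_bound _
      (Finset.sum_nonneg fun i _ => norm_nonneg _) fun x => ?_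
    have lhs_eq : (((Qop p hp' m).comp S).comp (K n) - (Qop p hp' m).comp S) x
        = ∑ i ∈ Finset.range m, lp.single p i ((f i) (K n x) - (f i) x) := by
      simp only [ContinuousLinearMap.sub_apply, ContinuousLinearMap.comp_apply]
      rw [Qop_eq_sum, Qop_eq_sum, ← Finset.sum_sub_distrib]
      refine Finset.sum_congr rfl fun i _ => ?_
      rw [single_sub]
      rw [hfdef]
      simp [coordCLM_apply]
    rw [lhs_eq]
    calc ‖∑ i ∈ Finset.range m, lp.single p i ((f i) (K n x) - (f i) x)‖
        ≤ ∑ i ∈ Finset.range m, ‖lp.single (E := fun _ : ℕ => ℝ) p i ((f i) (K n x) - (f i) x)‖ :=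
          norm_sum_le _ _
      _ ≤ ∑ i ∈ Finset.range m, ‖(f i).comp (K n) - f i‖ * ‖x‖ := by
          refine Finset.sum_le_sum fun i _ => ?_
          have h1 : ‖lp.single (E := fun _ : ℕ => ℝ) p i ((f i) (K n x) - (f i) x)‖
              = ‖(f i) (K n x) - (f i) x‖ := by
            have := lp.norm_single (E := fun _ : ℕ => ℝ)
              (pos_iff_ne_zero.2 (p_ne_zero (p := p))) i ((f i) (K n x) - (f i) x)
            simpa using this
          rw [h1]
          have : (f i) (K n x) - (f i) x = ((f i).comp (K n) - f i) x := by
            simp [ContinuousLinearMap.sub_apply]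
          rw [this]
          exact ((f i).comp (K n) - f i).le_opNorm x
      _ = (∑ i ∈ Finset.range m, ‖(f i).comp (K n) - f i‖) * ‖x‖ := by
          rw [Finset.sum_mul]
  have hsum : Tendsto (fun n => ∑ i ∈ Finset.range m, ‖(f i).comp (K n) - f i‖) atTop (𝓝 0) := by
    have : ∀ i ∈ Finset.range m,
        Tendsto (fun n => ‖(f i).comp (K n) - f i‖) atTop (𝓝 0) := by
      intro i _
      rw [← tendsto_iff_norm_sub_tendsto_zero]
      exact hb (f i)
    have := tendsto_finset_sum (Finset.range m) this
    simpa using this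
  have hev := hsum.eventually (eventually_lt_nhds (show (0:ℝ) < ε/4 by positivity))
  obtain ⟨N, hN⟩ := eventually_atTop.1 hev
  refine ⟨N, fun n hn => ?_⟩
  have decomp : S.comp (K n) - S
      = (S - (Qop p hp' m).comp S).comp (K n)
        + (((Qop p hp' m).comp S).comp (K n) - (Qop p hp' m).comp S)
        + ((Qop p hp' m).comp S - S) := by
    ext x
    simp only [ContinuousLinearMap.add_apply, ContinuousLinearMap.sub_apply,
      ContinuousLinearMap.comp_apply]
    abel
  have hterm1 : ‖(S - (Qop p hp' m).comp S).comp (K n)‖ ≤ ε' * C := by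
    calc ‖(S - (Qop p hp' m).comp S).comp (K n)‖
        ≤ ‖S - (Qop p hp' m).comp S‖ * ‖K n‖ := ContinuousLinearMap.opNorm_comp_le _ _
      _ ≤ ε' * C := mul_le_mul hm (hC n) (norm_nonneg _) hε'.le
  have hterm3 : ‖(Qop p hp' m).comp S - S‖ ≤ ε' := by
    rw [norm_sub_rev]; exact hm
  have hterm2 : ‖((Qop p hp' m).comp S).comp (K n) - (Qop p hp' m).comp S‖ < ε / 4 :=
    (mid n).trans_lt (by simpa using hN n hn)
  have htotal : ‖S.comp (K n) - S‖ < ε := by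
    rw [decomp]
    have h1 := norm_add₃_le (a := (S - (Qop p hp' m).comp S).comp (K n))
      (b := ((Qop p hp' m).comp S).comp (K n) - (Qop p hp' m).comp S)
      (c := (Qop p hp' m).comp S - S)
    have hee : ε' * C + ε' = ε / 4 := by
      rw [hε'def]; field_simp
    calc ‖(S - (Qop p hp' m).comp S).comp (K n)
          + (((Qop p hp' m).comp S).comp (K n) - (Qop p hp' m).comp S)
          + ((Qop p hp' m).comp S - S)‖ ≤ _ := h1
      _ < ε' * C + ε/4 + ε' := by linarith
      _ = ε / 4 + ε / 4 := by linarith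
      _ < ε := by linarith
  rw [dist_zero_right, Real.norm_eq_abs, abs_of_nonneg (norm_nonneg _)]
  exact htotal



set_option linter.unusedSectionVars false
set_option maxHeartbeats 1000000

/-- Limit of a sequence along an ultrafilter (junk value if no limit). -/
def ulim (𝒰 : Ultrafilter (ℕ × ℕ)) (u : ℕ × ℕ → ℝ) : ℝ :=
  limUnder (𝒰 : Filter (ℕ × ℕ)) u

theorem ulim_eq (𝒰 : Ultrafilter (ℕ × ℕ)) {u : ℕ × ℕ → ℝ} {a : ℝ}
    (h : Tendsto u (𝒰 : Filter (ℕ × ℕ)) (𝓝 a)) : ulim 𝒰 u = a :=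
  h.limUnder_eq

theorem tendsto_ulim (𝒰 : Ultrafilter (ℕ × ℕ)) {u : ℕ × ℕ → ℝ} {B : ℝ}
    (hB : ∀ x, |u x| ≤ B) : Tendsto u (𝒰 : Filter (ℕ × ℕ)) (𝓝 (ulim 𝒰 u)) := by
  have hmem : (𝒰 : Filter (ℕ × ℕ)).map u ≤ 𝓟 (Set.Icc (-B) B) := by
    rw [le_principal_iff, mem_map]
    exact Filter.Eventually.of_forall fun x => Set.mem_Icc.2 (abs_le.1 (hB x))
  obtain ⟨a, _, ha⟩ := isCompact_Icc.ultrafilter_le_nhds (Ultrafilter.map u 𝒰)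
    (by rwa [Ultrafilter.coe_map])
  rw [Ultrafilter.coe_map] at ha
  have h : Tendsto u (𝒰 : Filter (ℕ × ℕ)) (𝓝 a) := ha
  rwa [ulim_eq 𝒰 h]


set_option linter.unusedSectionVars false
set_option maxHeartbeats 1000000

variable {p : ℝ≥0∞} [Fact (1 ≤ p)]

/-- `ℓ_p` orthogonality-type estimate for split supports. -/
theorem norm_rpow_split (hp' : p ≠ ∞) (m : ℕ) (a b : lp (fun _ : ℕ => ℝ) p) :
    ‖Qop p hp' m a + (b - Qop p hp' m b)‖ ^ p.toReal
      ≤ ‖a‖ ^ p.toReal + ‖b‖ ^ p.toReal := by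
  have ht := toReal_pos hp'
  set w := Qop p hp' m a + (b - Qop p hp' m b) with hw
  have hsa : Summable fun i => ‖(a : ∀ _, ℝ) i‖ ^ p.toReal := (lp.memℓp a).summable ht
  have hsb : Summable fun i => ‖(b : ∀ _, ℝ) i‖ ^ p.toReal := (lp.memℓp b).summable ht
  have hsw : Summable fun i => ‖(w : ∀ _, ℝ) i‖ ^ p.toReal := (lp.memℓp w).summable ht
  have hle : ∀ i, ‖(w : ∀ _, ℝ) i‖ ^ p.toReal
      ≤ ‖(a : ∀ _, ℝ) i‖ ^ p.toReal + ‖(b : ∀ _, ℝ) i‖ ^ p.toReal := by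
    intro i
    have hco : (w : ∀ _, ℝ) i = if i < m then (a : ∀ _, ℝ) i else (b : ∀ _, ℝ) i := by
      rw [hw]
      rw [lp.coeFn_add, Pi.add_apply, lp.coeFn_sub, Pi.sub_apply,
        Qop_apply_coord hp', Qop_apply_coord hp']
      by_cases h : i < m
      · simp [h]
      · simp [h]
    rw [hco]
    by_cases h : i < m
    · rw [if_pos h]
      exact le_add_of_nonneg_right (Real.rpow_nonneg (norm_nonneg _) _)
    · rw [if_neg h]
      exact le_add_of_nonneg_left (Real.rpow_nonneg (norm_nonneg _) _)
  calc ‖w‖ ^ p.toReal = ∑' i, ‖(w : ∀ _, ℝ) i‖ ^ p.toReal := lp.norm_rpow_eq_tsum ht w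
    _ ≤ ∑' i, (‖(a : ∀ _, ℝ) i‖ ^ p.toReal + ‖(b : ∀ _, ℝ) i‖ ^ p.toReal) :=
        Summable.tsum_le_tsum hle hsw (hsa.add hsb)
    _ = (∑' i, ‖(a : ∀ _, ℝ) i‖ ^ p.toReal) + ∑' i, ‖(b : ∀ _, ℝ) i‖ ^ p.toReal :=
        Summable.tsum_add hsa hsb
    _ = ‖a‖ ^ p.toReal + ‖b‖ ^ p.toReal := by
        rw [← lp.norm_rpow_eq_tsum ht, ← lp.norm_rpow_eq_tsum ht]

variable {X : Type*} [NormedAddCommGroup X] [NormedSpace ℝ X]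

/-- `Q_m ∘ T ∘ K_n`. -/
def QTK (hp' : p ≠ ∞) (K : ℕ → X →L[ℝ] X) (mn : ℕ × ℕ)
    (T : X →L[ℝ] lp (fun _ : ℕ => ℝ) p) : X →L[ℝ] lp (fun _ : ℕ => ℝ) p :=
  ((Qop p hp' mn.1).comp T).comp (K mn.2)

/-- `(Id - Q_m) ∘ U ∘ (Id - K_n)` (expanded form). -/
def Dop (hp' : p ≠ ∞) (K : ℕ → X →L[ℝ] X) (mn : ℕ × ℕ)
    (U : X →L[ℝ] lp (fun _ : ℕ => ℝ) p) : X →L[ℝ] lp (fun _ : ℕ => ℝ) p :=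
  U - (Qop p hp' mn.1).comp U - U.comp (K mn.2) + ((Qop p hp' mn.1).comp U).comp (K mn.2)

theorem QTK_def (hp' : p ≠ ∞) (K : ℕ → X →L[ℝ] X) (mn : ℕ × ℕ)
    (T : X →L[ℝ] lp (fun _ : ℕ => ℝ) p) :
    QTK hp' K mn T = ((Qop p hp' mn.1).comp T).comp (K mn.2) := rfl

theorem Dop_def (hp' : p ≠ ∞) (K : ℕ → X →L[ℝ] X) (mn : ℕ × ℕ)
    (U : X →L[ℝ] lp (fun _ : ℕ => ℝ) p) :
    Dop hp' K mn U = U - (Qop p hp' mn.1).comp U - U.comp (K mn.2)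
      + ((Qop p hp' mn.1).comp U).comp (K mn.2) := rfl

theorem Dop_apply (hp' : p ≠ ∞) (K : ℕ → X →L[ℝ] X) (mn : ℕ × ℕ)
    (U : X →L[ℝ] lp (fun _ : ℕ => ℝ) p) (x : X) :
    Dop hp' K mn U x
      = U (x - K mn.2 x) - Qop p hp' mn.1 (U (x - K mn.2 x)) := by
  simp only [Dop, ContinuousLinearMap.add_apply, ContinuousLinearMap.sub_apply,
    ContinuousLinearMap.comp_apply, map_sub]
  abel

theorem norm_QTK_le (hp' : p ≠ ∞) (K : ℕ → X →L[ℝ] X) {C : ℝ} (hC : ∀ n, ‖K n‖ ≤ C)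
    (mn : ℕ × ℕ) (T : X →L[ℝ] lp (fun _ : ℕ => ℝ) p) :
    ‖QTK hp' K mn T‖ ≤ C * ‖T‖ := by
  have h0 : (0:ℝ) ≤ C := le_trans (norm_nonneg _) (hC 0)
  calc ‖QTK hp' K mn T‖ ≤ ‖(Qop p hp' mn.1).comp T‖ * ‖K mn.2‖ :=
        ContinuousLinearMap.opNorm_comp_le _ _
    _ ≤ (‖Qop p hp' mn.1‖ * ‖T‖) * C := by
        refine mul_le_mul (ContinuousLinearMap.opNorm_comp_le _ _) (hC _) (norm_nonneg _) ?_
        positivity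
    _ ≤ (1 * ‖T‖) * C := by
        have := norm_Qop_le hp' mn.1
        have h2 : ‖Qop p hp' mn.1‖ * ‖T‖ ≤ 1 * ‖T‖ :=
          mul_le_mul_of_nonneg_right this (norm_nonneg _)
        exact mul_le_mul_of_nonneg_right h2 h0
    _ = C * ‖T‖ := by ring

theorem norm_Dop_le (hp' : p ≠ ∞) (K : ℕ → X →L[ℝ] X) {C : ℝ} (hC : ∀ n, ‖K n‖ ≤ C)
    (mn : ℕ × ℕ) (U : X →L[ℝ] lp (fun _ : ℕ => ℝ) p) :
    ‖Dop hp' K mn U‖ ≤ (1 + C) * ‖U‖ := by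
  have h0 : (0:ℝ) ≤ C := le_trans (norm_nonneg _) (hC 0)
  refine ContinuousLinearMap.opNorm_le_bound _ (by positivity) fun x => ?_
  rw [Dop_apply]
  calc ‖U (x - K mn.2 x) - Qop p hp' mn.1 (U (x - K mn.2 x))‖
      ≤ ‖U (x - K mn.2 x)‖ := norm_sub_Qop_le hp' _ _
    _ ≤ ‖U‖ * ‖x - K mn.2 x‖ := U.le_opNorm _
    _ ≤ ‖U‖ * ((1 + C) * ‖x‖) := by
        refine mul_le_mul_of_nonneg_left ?_ (norm_nonneg _)
        calc ‖x - K mn.2 x‖ ≤ ‖x‖ + ‖K mn.2 x‖ := norm_sub_le _ _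
          _ ≤ ‖x‖ + C * ‖x‖ := by
              have := ((K mn.2).le_opNorm x)
              have h2 : ‖K mn.2 x‖ ≤ C * ‖x‖ :=
                this.trans (mul_le_mul_of_nonneg_right (hC _) (norm_nonneg _))
              linarith
          _ = (1 + C) * ‖x‖ := by ring
    _ = (1 + C) * ‖U‖ * ‖x‖ := by ring

/-- The key Clarkson-based estimate:
`‖Q_m T K_n + (1-Q_m) U (1-K_n)‖ ≤ max 1 ‖Id - 2 K_n‖` for `‖T‖, ‖U‖ ≤ 1`. -/
theorem norm_QTK_add_Dop_le (hp' : p ≠ ∞)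
    (hClark : ∀ u v : X, ‖u‖ ^ p.toReal + ‖v‖ ^ p.toReal ≤
      (‖u + v‖ ^ p.toReal + ‖u - v‖ ^ p.toReal) / 2)
    (K : ℕ → X →L[ℝ] X) (mn : ℕ × ℕ) (T U : X →L[ℝ] lp (fun _ : ℕ => ℝ) p)
    (hT : ‖T‖ ≤ 1) (hU : ‖U‖ ≤ 1) :
    ‖QTK hp' K mn T + Dop hp' K mn U‖
      ≤ max 1 ‖ContinuousLinearMap.id ℝ X - (2:ℝ) • K mn.2‖ := by
  have ht := toReal_pos hp'
  set n := mn.2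
  set M := max 1 ‖ContinuousLinearMap.id ℝ X - (2:ℝ) • K n‖ with hM
  have hM1 : (1:ℝ) ≤ M := le_max_left _ _
  have hM0 : (0:ℝ) ≤ M := zero_le_one.trans hM1
  refine ContinuousLinearMap.opNorm_le_bound _ hM0 fun x => ?_
  have happ : (QTK hp' K mn T + Dop hp' K mn U) x
      = Qop p hp' mn.1 (T (K n x))
        + (U (x - K n x) - Qop p hp' mn.1 (U (x - K n x))) := by
    rw [ContinuousLinearMap.add_apply, Dop_apply]
    rfl
  rw [happ]
  -- rpow chain
  have h1 := norm_rpow_split hp' mn.1 (T (K n x)) (U (x - K n x))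
  have h2 : ‖T (K n x)‖ ^ p.toReal ≤ ‖K n x‖ ^ p.toReal := by
    refine Real.rpow_le_rpow (norm_nonneg _) ?_ ht.le
    calc ‖T (K n x)‖ ≤ ‖T‖ * ‖K n x‖ := T.le_opNorm _
      _ ≤ 1 * ‖K n x‖ := mul_le_mul_of_nonneg_right hT (norm_nonneg _)
      _ = ‖K n x‖ := one_mul _
  have h3 : ‖U (x - K n x)‖ ^ p.toReal ≤ ‖x - K n x‖ ^ p.toReal := by
    refine Real.rpow_le_rpow (norm_nonneg _) ?_ ht.le
    calc ‖U (x - K n x)‖ ≤ ‖U‖ * ‖x - K n x‖ := U.le_opNorm _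
      _ ≤ 1 * ‖x - K n x‖ := mul_le_mul_of_nonneg_right hU (norm_nonneg _)
      _ = ‖x - K n x‖ := one_mul _
  have hclark := hClark (K n x) (x - K n x)
  have hsum : K n x + (x - K n x) = x := by abel
  have hdiff : K n x - (x - K n x) = -(x - (2:ℝ) • K n x) := by
    rw [two_smul]; abel
  rw [hsum, hdiff, norm_neg] at hclark
  have hid : x - (2:ℝ) • K n x = (ContinuousLinearMap.id ℝ X - (2:ℝ) • K n) x := by
    simp [ContinuousLinearMap.sub_apply, ContinuousLinearMap.smul_apply]
  have hbound : ‖x - (2:ℝ) • K n x‖ ≤ M * ‖x‖ := by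
    rw [hid]
    calc ‖(ContinuousLinearMap.id ℝ X - (2:ℝ) • K n) x‖
        ≤ ‖ContinuousLinearMap.id ℝ X - (2:ℝ) • K n‖ * ‖x‖ :=
          ContinuousLinearMap.le_opNorm _ _
      _ ≤ M * ‖x‖ := mul_le_mul_of_nonneg_right (le_max_right _ _) (norm_nonneg _)
  have hxM : ‖x‖ ≤ M * ‖x‖ := le_mul_of_one_le_left (norm_nonneg _) hM1
  have hMx0 : (0:ℝ) ≤ M * ‖x‖ := by positivity
  have h4 : ‖x‖ ^ p.toReal ≤ (M * ‖x‖) ^ p.toReal :=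
    Real.rpow_le_rpow (norm_nonneg _) hxM ht.le
  have h5 : ‖x - (2:ℝ) • K n x‖ ^ p.toReal ≤ (M * ‖x‖) ^ p.toReal :=
    Real.rpow_le_rpow (norm_nonneg _) hbound ht.le
  have hfinal : ‖Qop p hp' mn.1 (T (K n x))
      + (U (x - K n x) - Qop p hp' mn.1 (U (x - K n x)))‖ ^ p.toReal
      ≤ (M * ‖x‖) ^ p.toReal := by
    calc ‖Qop p hp' mn.1 (T (K n x))
        + (U (x - K n x) - Qop p hp' mn.1 (U (x - K n x)))‖ ^ p.toReal
        ≤ ‖T (K n x)‖ ^ p.toReal + ‖U (x - K n x)‖ ^ p.toReal := h1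
      _ ≤ ‖K n x‖ ^ p.toReal + ‖x - K n x‖ ^ p.toReal := add_le_add h2 h3
      _ ≤ (‖x‖ ^ p.toReal + ‖x - (2:ℝ) • K n x‖ ^ p.toReal) / 2 := hclark
      _ ≤ ((M * ‖x‖) ^ p.toReal + (M * ‖x‖) ^ p.toReal) / 2 := by linarith
      _ = (M * ‖x‖) ^ p.toReal := by ring
  have := (Real.rpow_le_rpow_iff (norm_nonneg _) hMx0 ht).1 hfinal
  exact this


set_option linter.unusedSectionVars false
set_option maxHeartbeats 1000000

variable {p : ℝ≥0∞} [Fact (1 ≤ p)]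



theorem le_of_forall_pos_le_add' {a b : ℝ} (h : ∀ ε > 0, a ≤ b + ε) : a ≤ b := by
  by_contra hab
  push_neg at hab
  have := h ((a - b)/2) (by linarith)
  linarith

theorem exists_norm_le_one_lt {E : Type*} [NormedAddCommGroup E] [NormedSpace ℝ E]
    (ψ : E →L[ℝ] ℝ) {a : ℝ} (ha : a < ‖ψ‖) : ∃ T : E, ‖T‖ ≤ 1 ∧ a < ψ T := by
  rcases lt_or_ge a 0 with h0 | h0
  · exact ⟨0, by simp, by simpa using h0⟩
  · obtain ⟨x, hx1, hx2⟩ := ψ.exists_lt_apply_of_lt_opNorm ha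
    rcases le_or_gt 0 (ψ x) with h | h
    · refine ⟨x, hx1.le, ?_⟩
      rwa [Real.norm_eq_abs, abs_of_nonneg h] at hx2
    · refine ⟨-x, by simpa using hx1.le, ?_⟩
      rw [map_neg]
      rwa [Real.norm_eq_abs, abs_of_neg h] at hx2


section PR

variable (hp' : p ≠ ∞) (K : ℕ → X →L[ℝ] X) (𝒰 : Ultrafilter (ℕ × ℕ))
  {C : ℝ} (hC0 : 0 ≤ C) (hC : ∀ n, ‖K n‖ ≤ C)

/-- Compactness of `Q_m T K_n`. -/
theorem isCompact_QTK (hcomp : ∀ n, IsCompactOperator ⇑(K n)) (mn : ℕ × ℕ)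
    (T : X →L[ℝ] lp (fun _ : ℕ => ℝ) p) : IsCompactOperator ⇑(QTK hp' K mn T) := by
  rw [QTK_def]
  exact (hcomp mn.2).clm_comp ((Qop p hp' mn.1).comp T)

theorem isCompact_Qcomp (mn : ℕ × ℕ) (U : X →L[ℝ] lp (fun _ : ℕ => ℝ) p) :
    IsCompactOperator ⇑((Qop p hp' mn.1).comp U) := by
  exact (isCompactOperator_Qop hp' mn.1).comp_clm U

theorem isCompact_compK (hcomp : ∀ n, IsCompactOperator ⇑(K n)) (n : ℕ)
    (U : X →L[ℝ] lp (fun _ : ℕ => ℝ) p) : IsCompactOperator ⇑(U.comp (K n)) := by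
  exact (hcomp n).clm_comp U

/-- `Pφ(T) = lim_𝒰 φ(Q_m T K_n)`. -/
def Pfun (φ : (X →L[ℝ] lp (fun _ : ℕ => ℝ) p) →L[ℝ] ℝ)
    (T : X →L[ℝ] lp (fun _ : ℕ => ℝ) p) : ℝ :=
  ulim 𝒰 fun mn => φ (QTK hp' K mn T)

/-- `Rφ(U) = lim_𝒰 φ((1-Q_m) U (1-K_n))`. -/
def Rfun (φ : (X →L[ℝ] lp (fun _ : ℕ => ℝ) p) →L[ℝ] ℝ)
    (U : X →L[ℝ] lp (fun _ : ℕ => ℝ) p) : ℝ :=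
  ulim 𝒰 fun mn => φ (Dop hp' K mn U)

include hC in
theorem tendsto_Pfun (φ : (X →L[ℝ] lp (fun _ : ℕ => ℝ) p) →L[ℝ] ℝ)
    (T : X →L[ℝ] lp (fun _ : ℕ => ℝ) p) :
    Tendsto (fun mn => φ (QTK hp' K mn T)) (𝒰 : Filter (ℕ × ℕ))
      (𝓝 (Pfun hp' K 𝒰 φ T)) := by
  refine tendsto_ulim 𝒰 (B := ‖φ‖ * (C * ‖T‖)) fun mn => ?_
  rw [← Real.norm_eq_abs]
  calc ‖φ (QTK hp' K mn T)‖ ≤ ‖φ‖ * ‖QTK hp' K mn T‖ := φ.le_opNorm _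
    _ ≤ ‖φ‖ * (C * ‖T‖) := by
        have h := norm_QTK_le hp' K hC mn T
        have h0 : (0:ℝ) ≤ ‖φ‖ := norm_nonneg φ
        exact mul_le_mul_of_nonneg_left h h0

include hC in
theorem tendsto_Rfun (φ : (X →L[ℝ] lp (fun _ : ℕ => ℝ) p) →L[ℝ] ℝ)
    (U : X →L[ℝ] lp (fun _ : ℕ => ℝ) p) :
    Tendsto (fun mn => φ (Dop hp' K mn U)) (𝒰 : Filter (ℕ × ℕ))
      (𝓝 (Rfun hp' K 𝒰 φ U)) := by
  refine tendsto_ulim 𝒰 (B := ‖φ‖ * ((1 + C) * ‖U‖)) fun mn => ?_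
  rw [← Real.norm_eq_abs]
  calc ‖φ (Dop hp' K mn U)‖ ≤ ‖φ‖ * ‖Dop hp' K mn U‖ := φ.le_opNorm _
    _ ≤ ‖φ‖ * ((1 + C) * ‖U‖) := by
        have h := norm_Dop_le hp' K hC mn U
        have h0 : (0:ℝ) ≤ ‖φ‖ := norm_nonneg φ
        exact mul_le_mul_of_nonneg_left h h0

include hC in
theorem abs_Pfun_le (φ : (X →L[ℝ] lp (fun _ : ℕ => ℝ) p) →L[ℝ] ℝ)
    (T : X →L[ℝ] lp (fun _ : ℕ => ℝ) p) :
    |Pfun hp' K 𝒰 φ T| ≤ ‖φ‖ * (C * ‖T‖) := by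
  refine le_of_tendsto (tendsto_Pfun hp' K 𝒰 hC φ T).abs
    (Filter.Eventually.of_forall fun mn => ?_)
  rw [← Real.norm_eq_abs]
  calc ‖φ (QTK hp' K mn T)‖ ≤ ‖φ‖ * ‖QTK hp' K mn T‖ := φ.le_opNorm _
    _ ≤ ‖φ‖ * (C * ‖T‖) := by
        have h := norm_QTK_le hp' K hC mn T
        have h0 : (0:ℝ) ≤ ‖φ‖ := norm_nonneg φ
        exact mul_le_mul_of_nonneg_left h h0

include hC in
theorem abs_Rfun_le (φ : (X →L[ℝ] lp (fun _ : ℕ => ℝ) p) →L[ℝ] ℝ)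
    (U : X →L[ℝ] lp (fun _ : ℕ => ℝ) p) :
    |Rfun hp' K 𝒰 φ U| ≤ ‖φ‖ * ((1 + C) * ‖U‖) := by
  refine le_of_tendsto (tendsto_Rfun hp' K 𝒰 hC φ U).abs
    (Filter.Eventually.of_forall fun mn => ?_)
  rw [← Real.norm_eq_abs]
  calc ‖φ (Dop hp' K mn U)‖ ≤ ‖φ‖ * ‖Dop hp' K mn U‖ := φ.le_opNorm _
    _ ≤ ‖φ‖ * ((1 + C) * ‖U‖) := by
        have h := norm_Dop_le hp' K hC mn U
        have h0 : (0:ℝ) ≤ ‖φ‖ := norm_nonneg φ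
        exact mul_le_mul_of_nonneg_left h h0

theorem QTK_add (mn : ℕ × ℕ) (T T' : X →L[ℝ] lp (fun _ : ℕ => ℝ) p) :
    QTK hp' K mn (T + T') = QTK hp' K mn T + QTK hp' K mn T' := by
  simp only [QTK_def, ContinuousLinearMap.comp_add, ContinuousLinearMap.add_comp]

theorem QTK_smul (mn : ℕ × ℕ) (c : ℝ) (T : X →L[ℝ] lp (fun _ : ℕ => ℝ) p) :
    QTK hp' K mn (c • T) = c • QTK hp' K mn T := by
  simp only [QTK_def, ContinuousLinearMap.comp_smul, ContinuousLinearMap.smul_comp]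

theorem Dop_add (mn : ℕ × ℕ) (U U' : X →L[ℝ] lp (fun _ : ℕ => ℝ) p) :
    Dop hp' K mn (U + U') = Dop hp' K mn U + Dop hp' K mn U' := by
  simp only [Dop_def, ContinuousLinearMap.comp_add, ContinuousLinearMap.add_comp]
  abel

theorem Dop_smul (mn : ℕ × ℕ) (c : ℝ) (U : X →L[ℝ] lp (fun _ : ℕ => ℝ) p) :
    Dop hp' K mn (c • U) = c • Dop hp' K mn U := by
  simp only [Dop_def, ContinuousLinearMap.comp_smul, ContinuousLinearMap.smul_comp,
    smul_sub, smul_add]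


/-- The functional `T ↦ Pφ(T)` as a linear map. -/
def PfunL (φ : (X →L[ℝ] lp (fun _ : ℕ => ℝ) p) →L[ℝ] ℝ) :
    (X →L[ℝ] lp (fun _ : ℕ => ℝ) p) →ₗ[ℝ] ℝ where
  toFun T := Pfun hp' K 𝒰 φ T
  map_add' T T' := by
    refine ulim_eq 𝒰 ?_
    have h1 := (tendsto_Pfun hp' K 𝒰 hC φ T).add (tendsto_Pfun hp' K 𝒰 hC φ T')
    have heq : (fun mn => φ (QTK hp' K mn (T + T')))
        = fun mn => φ (QTK hp' K mn T) + φ (QTK hp' K mn T') := by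
      funext mn; rw [QTK_add, _root_.map_add]
    rw [heq]; exact h1
  map_smul' c T := by
    simp only [RingHom.id_apply, smul_eq_mul]
    refine ulim_eq 𝒰 ?_
    have h1 := (tendsto_Pfun hp' K 𝒰 hC φ T).const_mul c
    have heq : (fun mn => φ (QTK hp' K mn (c • T)))
        = fun mn => c * φ (QTK hp' K mn T) := by
      funext mn; rw [QTK_smul, _root_.map_smul]; rfl
    rw [heq]; exact h1

/-- The functional `T ↦ Pφ(T)` as a continuous linear map. -/
def Pcl (φ : (X →L[ℝ] lp (fun _ : ℕ => ℝ) p) →L[ℝ] ℝ) :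
    (X →L[ℝ] lp (fun _ : ℕ => ℝ) p) →L[ℝ] ℝ :=
  LinearMap.mkContinuous (PfunL hp' K 𝒰 hC φ) (‖φ‖ * C) fun T => by
    rw [Real.norm_eq_abs]
    calc |Pfun hp' K 𝒰 φ T| ≤ ‖φ‖ * (C * ‖T‖) := abs_Pfun_le hp' K 𝒰 hC φ T
      _ = ‖φ‖ * C * ‖T‖ := by ring

theorem Pcl_apply (φ : (X →L[ℝ] lp (fun _ : ℕ => ℝ) p) →L[ℝ] ℝ)
    (T : X →L[ℝ] lp (fun _ : ℕ => ℝ) p) :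
    Pcl hp' K 𝒰 hC φ T = Pfun hp' K 𝒰 φ T := rfl

/-- `P` as a continuous linear endomorphism of the dual. -/
def Pmap : ((X →L[ℝ] lp (fun _ : ℕ => ℝ) p) →L[ℝ] ℝ) →L[ℝ]
    ((X →L[ℝ] lp (fun _ : ℕ => ℝ) p) →L[ℝ] ℝ) :=
  LinearMap.mkContinuous
    { toFun := fun φ => Pcl hp' K 𝒰 hC φ
      map_add' := fun φ ψ => by
        refine ContinuousLinearMap.ext fun T => ?_
        rw [ContinuousLinearMap.add_apply, Pcl_apply, Pcl_apply, Pcl_apply]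
        refine ulim_eq 𝒰 ?_
        exact (tendsto_Pfun hp' K 𝒰 hC φ T).add (tendsto_Pfun hp' K 𝒰 hC ψ T)
      map_smul' := fun c φ => by
        simp only [RingHom.id_apply]
        refine ContinuousLinearMap.ext fun T => ?_
        rw [ContinuousLinearMap.smul_apply, Pcl_apply, Pcl_apply, smul_eq_mul]
        refine ulim_eq 𝒰 ?_
        exact (tendsto_Pfun hp' K 𝒰 hC φ T).const_mul c }
    C fun φ => by
      refine ContinuousLinearMap.opNorm_le_bound _ (mul_nonneg hC0 (norm_nonneg φ)) fun T => ?_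
      rw [Real.norm_eq_abs]
      calc |Pfun hp' K 𝒰 φ T| ≤ ‖φ‖ * (C * ‖T‖) := abs_Pfun_le hp' K 𝒰 hC φ T
        _ = C * ‖φ‖ * ‖T‖ := by ring

theorem Pmap_apply (φ : (X →L[ℝ] lp (fun _ : ℕ => ℝ) p) →L[ℝ] ℝ)
    (T : X →L[ℝ] lp (fun _ : ℕ => ℝ) p) :
    Pmap hp' K 𝒰 hC0 hC φ T = Pfun hp' K 𝒰 φ T := rfl

/-- The functional `U ↦ Rφ(U)` as a linear map. -/
def RfunL (φ : (X →L[ℝ] lp (fun _ : ℕ => ℝ) p) →L[ℝ] ℝ) :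
    (X →L[ℝ] lp (fun _ : ℕ => ℝ) p) →ₗ[ℝ] ℝ where
  toFun U := Rfun hp' K 𝒰 φ U
  map_add' U U' := by
    refine ulim_eq 𝒰 ?_
    have h1 := (tendsto_Rfun hp' K 𝒰 hC φ U).add (tendsto_Rfun hp' K 𝒰 hC φ U')
    have heq : (fun mn => φ (Dop hp' K mn (U + U')))
        = fun mn => φ (Dop hp' K mn U) + φ (Dop hp' K mn U') := by
      funext mn; rw [Dop_add, _root_.map_add]
    rw [heq]; exact h1
  map_smul' c U := by
    simp only [RingHom.id_apply, smul_eq_mul]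
    refine ulim_eq 𝒰 ?_
    have h1 := (tendsto_Rfun hp' K 𝒰 hC φ U).const_mul c
    have heq : (fun mn => φ (Dop hp' K mn (c • U)))
        = fun mn => c * φ (Dop hp' K mn U) := by
      funext mn; rw [Dop_smul, _root_.map_smul]; rfl
    rw [heq]; exact h1

/-- The functional `U ↦ Rφ(U)` as a continuous linear map. -/
def Rcl (φ : (X →L[ℝ] lp (fun _ : ℕ => ℝ) p) →L[ℝ] ℝ) :
    (X →L[ℝ] lp (fun _ : ℕ => ℝ) p) →L[ℝ] ℝ :=
  LinearMap.mkContinuous (RfunL hp' K 𝒰 hC φ) (‖φ‖ * (1 + C)) fun U => by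
    rw [Real.norm_eq_abs]
    calc |Rfun hp' K 𝒰 φ U| ≤ ‖φ‖ * ((1 + C) * ‖U‖) := abs_Rfun_le hp' K 𝒰 hC φ U
      _ = ‖φ‖ * (1 + C) * ‖U‖ := by ring

theorem Rcl_apply (φ : (X →L[ℝ] lp (fun _ : ℕ => ℝ) p) →L[ℝ] ℝ)
    (U : X →L[ℝ] lp (fun _ : ℕ => ℝ) p) :
    Rcl hp' K 𝒰 hC φ U = Rfun hp' K 𝒰 φ U := rfl

/-- `R` as a continuous linear endomorphism of the dual. -/
def Rmap : ((X →L[ℝ] lp (fun _ : ℕ => ℝ) p) →L[ℝ] ℝ) →L[ℝ]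
    ((X →L[ℝ] lp (fun _ : ℕ => ℝ) p) →L[ℝ] ℝ) :=
  LinearMap.mkContinuous
    { toFun := fun φ => Rcl hp' K 𝒰 hC φ
      map_add' := fun φ ψ => by
        refine ContinuousLinearMap.ext fun U => ?_
        rw [ContinuousLinearMap.add_apply, Rcl_apply, Rcl_apply, Rcl_apply]
        refine ulim_eq 𝒰 ?_
        exact (tendsto_Rfun hp' K 𝒰 hC φ U).add (tendsto_Rfun hp' K 𝒰 hC ψ U)
      map_smul' := fun c φ => by
        simp only [RingHom.id_apply]
        refine ContinuousLinearMap.ext fun U => ?_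
        rw [ContinuousLinearMap.smul_apply, Rcl_apply, Rcl_apply, smul_eq_mul]
        refine ulim_eq 𝒰 ?_
        exact (tendsto_Rfun hp' K 𝒰 hC φ U).const_mul c }
    (1 + C) fun φ => by
      refine ContinuousLinearMap.opNorm_le_bound _
        (mul_nonneg (by linarith) (norm_nonneg φ)) fun U => ?_
      rw [Real.norm_eq_abs]
      calc |Rfun hp' K 𝒰 φ U| ≤ ‖φ‖ * ((1 + C) * ‖U‖) := abs_Rfun_le hp' K 𝒰 hC φ U
        _ = (1 + C) * ‖φ‖ * ‖U‖ := by ring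

theorem Rmap_apply (φ : (X →L[ℝ] lp (fun _ : ℕ => ℝ) p) →L[ℝ] ℝ)
    (U : X →L[ℝ] lp (fun _ : ℕ => ℝ) p) :
    Rmap hp' K 𝒰 hC0 hC φ U = Rfun hp' K 𝒰 φ U := rfl


section Main

variable (h𝒰 : (𝒰 : Filter (ℕ × ℕ)) ≤ atTop ×ˢ atTop)
variable (hcomp : ∀ n, IsCompactOperator ⇑(K n))
variable (hb : ∀ f : X →L[ℝ] ℝ, Tendsto (fun n => f.comp (K n)) atTop (𝓝 f))

include h𝒰 hcomp hb hC0 hC in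
/-- `P` agrees with the identity on compact operators. -/
theorem Pfun_eq_on_compact (φ : (X →L[ℝ] lp (fun _ : ℕ => ℝ) p) →L[ℝ] ℝ)
    (S : X →L[ℝ] lp (fun _ : ℕ => ℝ) p) (hS : IsCompactOperator ⇑S) :
    Pfun hp' K 𝒰 φ S = φ S := by
  have hconv : Tendsto (fun mn : ℕ × ℕ => QTK hp' K mn S) (atTop ×ˢ atTop) (𝓝 S) := by
    rw [tendsto_iff_norm_sub_tendsto_zero]
    have hbd : ∀ mn : ℕ × ℕ, ‖QTK hp' K mn S - S‖
        ≤ ‖S.comp (K mn.2) - S‖ + ‖S - (Qop p hp' mn.1).comp S‖ := by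
      intro mn
      have hdecomp : QTK hp' K mn S - S
          = ((Qop p hp' mn.1).comp (S.comp (K mn.2) - S))
            + ((Qop p hp' mn.1).comp S - S) := by
        rw [QTK_def]
        ext x
        simp only [ContinuousLinearMap.add_apply, ContinuousLinearMap.sub_apply,
          ContinuousLinearMap.comp_apply, map_sub]
        abel
      rw [hdecomp]
      calc ‖((Qop p hp' mn.1).comp (S.comp (K mn.2) - S)) + ((Qop p hp' mn.1).comp S - S)‖
          ≤ ‖(Qop p hp' mn.1).comp (S.comp (K mn.2) - S)‖ + ‖(Qop p hp' mn.1).comp S - S‖ :=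
            norm_add_le _ _
        _ ≤ ‖S.comp (K mn.2) - S‖ + ‖S - (Qop p hp' mn.1).comp S‖ := by
            refine add_le_add ?_ (le_of_eq (norm_sub_rev _ _))
            calc ‖(Qop p hp' mn.1).comp (S.comp (K mn.2) - S)‖
                ≤ ‖Qop p hp' mn.1‖ * ‖S.comp (K mn.2) - S‖ :=
                  ContinuousLinearMap.opNorm_comp_le _ _
              _ ≤ 1 * ‖S.comp (K mn.2) - S‖ :=
                  mul_le_mul_of_nonneg_right (norm_Qop_le hp' mn.1) (norm_nonneg _)
              _ = ‖S.comp (K mn.2) - S‖ := one_mul _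
    have hlim : Tendsto (fun mn : ℕ × ℕ =>
        ‖S.comp (K mn.2) - S‖ + ‖S - (Qop p hp' mn.1).comp S‖) (atTop ×ˢ atTop) (𝓝 0) := by
      have h1 : Tendsto (fun mn : ℕ × ℕ => ‖S.comp (K mn.2) - S‖) (atTop ×ˢ atTop) (𝓝 0) :=
        (tendsto_comp_K hp' K hC0 hC hb S hS).comp tendsto_snd
      have h2 : Tendsto (fun mn : ℕ × ℕ => ‖S - (Qop p hp' mn.1).comp S‖)
          (atTop ×ˢ atTop) (𝓝 0) :=
        (tendsto_sub_Qop_comp hp' S hS).comp tendsto_fst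
      simpa using h1.add h2
    exact squeeze_zero (fun mn => norm_nonneg _) hbd hlim
  have hφ : Tendsto (fun mn : ℕ × ℕ => φ (QTK hp' K mn S)) (atTop ×ˢ atTop) (𝓝 (φ S)) :=
    (φ.continuous.tendsto S).comp hconv
  exact ulim_eq 𝒰 (hφ.mono_left h𝒰)

include h𝒰 hcomp hb hC0 hC in
/-- `P` is idempotent. -/
theorem Pfun_idem (φ : (X →L[ℝ] lp (fun _ : ℕ => ℝ) p) →L[ℝ] ℝ)
    (T : X →L[ℝ] lp (fun _ : ℕ => ℝ) p) :
    Pfun hp' K 𝒰 (Pcl hp' K 𝒰 hC φ) T = Pfun hp' K 𝒰 φ T := by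
  unfold Pfun
  congr 1
  funext mn
  rw [Pcl_apply]
  exact Pfun_eq_on_compact hp' K 𝒰 hC0 hC h𝒰 hcomp hb φ (QTK hp' K mn T)
    (isCompact_QTK hp' K hcomp mn T)

include hcomp in
/-- `P` vanishes on functionals annihilating compact operators. -/
theorem Pfun_zero_on_annih {φ : (X →L[ℝ] lp (fun _ : ℕ => ℝ) p) →L[ℝ] ℝ}
    (hφ : ∀ S : X →L[ℝ] lp (fun _ : ℕ => ℝ) p, IsCompactOperator ⇑S → φ S = 0)
    (T : X →L[ℝ] lp (fun _ : ℕ => ℝ) p) : Pfun hp' K 𝒰 φ T = 0 := by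
  unfold Pfun
  have heq : (fun mn : ℕ × ℕ => φ (QTK hp' K mn T)) = fun _ => (0:ℝ) :=
    funext fun mn => hφ _ (isCompact_QTK hp' K hcomp mn T)
  rw [heq]
  exact ulim_eq 𝒰 tendsto_const_nhds

include hcomp in
/-- `R` is the identity on functionals annihilating compact operators. -/
theorem Rfun_eq_on_annih {φ : (X →L[ℝ] lp (fun _ : ℕ => ℝ) p) →L[ℝ] ℝ}
    (hφ : ∀ S : X →L[ℝ] lp (fun _ : ℕ => ℝ) p, IsCompactOperator ⇑S → φ S = 0)
    (U : X →L[ℝ] lp (fun _ : ℕ => ℝ) p) : Rfun hp' K 𝒰 φ U = φ U := by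
  unfold Rfun
  have heq : (fun mn : ℕ × ℕ => φ (Dop hp' K mn U)) = fun _ => φ U := by
    funext mn
    rw [Dop_def, _root_.map_add, _root_.map_sub, _root_.map_sub]
    have e1 : φ ((Qop p hp' mn.1).comp U) = 0 := hφ _ (isCompact_Qcomp hp' mn U)
    have e2 : φ (U.comp (K mn.2)) = 0 := hφ _ (isCompact_compK K hcomp mn.2 U)
    have e3 : φ (((Qop p hp' mn.1).comp U).comp (K mn.2)) = 0 := by
      have := isCompact_QTK hp' K hcomp mn U
      rw [QTK_def] at this
      exact hφ _ this
    rw [e1, e2, e3]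
    ring
  rw [heq]
  exact ulim_eq 𝒰 tendsto_const_nhds

include h𝒰 hC in
/-- The key inequality: `‖Pφ‖ + ‖Rφ‖ ≤ ‖φ‖`. -/
theorem dagger
    (hClark : ∀ u v : X, ‖u‖ ^ p.toReal + ‖v‖ ^ p.toReal ≤
      (‖u + v‖ ^ p.toReal + ‖u - v‖ ^ p.toReal) / 2)
    (hc : Tendsto (fun n => ‖ContinuousLinearMap.id ℝ X - (2:ℝ) • K n‖) atTop (𝓝 1))
    (φ : (X →L[ℝ] lp (fun _ : ℕ => ℝ) p) →L[ℝ] ℝ) :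
    ‖Pcl hp' K 𝒰 hC φ‖ + ‖Rcl hp' K 𝒰 hC φ‖ ≤ ‖φ‖ := by
  have key : ∀ a b : ℝ, a < ‖Pcl hp' K 𝒰 hC φ‖ → b < ‖Rcl hp' K 𝒰 hC φ‖ → a + b ≤ ‖φ‖ := by
    intro a b ha hb'
    obtain ⟨T, hT1, hT2⟩ := exists_norm_le_one_lt _ ha
    obtain ⟨U, hU1, hU2⟩ := exists_norm_le_one_lt _ hb'
    rw [Pcl_apply] at hT2
    rw [Rcl_apply] at hU2
    set L := Pfun hp' K 𝒰 φ T + Rfun hp' K 𝒰 φ U with hLdef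
    have hW : Tendsto (fun mn => φ (QTK hp' K mn T + Dop hp' K mn U))
        (𝒰 : Filter (ℕ × ℕ)) (𝓝 L) := by
      have h1 := (tendsto_Pfun hp' K 𝒰 hC φ T).add (tendsto_Rfun hp' K 𝒰 hC φ U)
      have heq : (fun mn => φ (QTK hp' K mn T + Dop hp' K mn U))
          = fun mn => φ (QTK hp' K mn T) + φ (Dop hp' K mn U) := by
        funext mn; rw [_root_.map_add]
      rw [heq]; exact h1
    have hLle : L ≤ ‖φ‖ := by
      refine le_of_forall_pos_le_add' fun ε hε => ?_
      set ε' := ε / (‖φ‖ + 1) with hε'def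
      have hφ1 : (0:ℝ) < ‖φ‖ + 1 := by positivity
      have hε'0 : 0 < ε' := by positivity
      have hMev : ∀ᶠ n in atTop,
          max 1 ‖ContinuousLinearMap.id ℝ X - (2:ℝ) • K n‖ ≤ 1 + ε' := by
        have hmax : Tendsto (fun n => max 1 ‖ContinuousLinearMap.id ℝ X - (2:ℝ) • K n‖)
            atTop (𝓝 (max 1 1)) := tendsto_const_nhds.max hc
        rw [max_self] at hmax
        exact hmax.eventually (eventually_le_nhds (by linarith))
      have hev𝒰 : ∀ᶠ mn : ℕ × ℕ in (𝒰 : Filter (ℕ × ℕ)),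
          max 1 ‖ContinuousLinearMap.id ℝ X - (2:ℝ) • K mn.2‖ ≤ 1 + ε' :=
        Filter.Eventually.filter_mono h𝒰 (hMev.prod_inr atTop)
      have hub : ∀ᶠ mn : ℕ × ℕ in (𝒰 : Filter (ℕ × ℕ)),
          φ (QTK hp' K mn T + Dop hp' K mn U) ≤ ‖φ‖ + ε := by
        refine hev𝒰.mono fun mn hm => ?_
        have h1 : ‖QTK hp' K mn T + Dop hp' K mn U‖
            ≤ max 1 ‖ContinuousLinearMap.id ℝ X - (2:ℝ) • K mn.2‖ :=
          norm_QTK_add_Dop_le hp' hClark K mn T U hT1 hU1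
        have h2 : φ (QTK hp' K mn T + Dop hp' K mn U)
            ≤ |φ (QTK hp' K mn T + Dop hp' K mn U)| := le_abs_self _
        have h3 : |φ (QTK hp' K mn T + Dop hp' K mn U)|
            ≤ ‖φ‖ * ‖QTK hp' K mn T + Dop hp' K mn U‖ := by
          rw [← Real.norm_eq_abs]
          exact φ.le_opNorm _
        have h4 : ‖φ‖ * ‖QTK hp' K mn T + Dop hp' K mn U‖ ≤ ‖φ‖ * (1 + ε') := by
          have h0 : (0:ℝ) ≤ ‖φ‖ := norm_nonneg φ
          exact mul_le_mul_of_nonneg_left (h1.trans hm) h0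
        have h6 : ‖φ‖ * ε' ≤ ε := by
          rw [hε'def, mul_comm, div_mul_eq_mul_div, div_le_iff₀ hφ1]
          nlinarith [norm_nonneg φ, hε.le]
        nlinarith [norm_nonneg φ]
      exact le_of_tendsto hW hub
    linarith
  refine le_of_forall_pos_le_add' fun ε hε => ?_
  have := key (‖Pcl hp' K 𝒰 hC φ‖ - ε/2) (‖Rcl hp' K 𝒰 hC φ‖ - ε/2)
    (by linarith) (by linarith)
  linarith

end Main

end PR


end MIdealAux

set_option maxHeartbeats 1000000 in
set_option synthInstance.maxHeartbeats 1000000 in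
/-- If `X` satisfies the two-point Clarkson-type inequality for `p` and admits compact
operators satisfying (a)–(c), then `K(X, ℓ_p)` is an M-ideal in `L(X, ℓ_p)`. -/
theorem mIdeal_compactOperator_lp_of_clarkson (p : ℝ≥0∞) [Fact (1 ≤ p)] (hp : 1 < p)
    (hp' : p ≠ ∞) (X : Type*) [NormedAddCommGroup X] [NormedSpace ℝ X] [CompleteSpace X]
    (hClark : ∀ u v : X, ‖u‖ ^ p.toReal + ‖v‖ ^ p.toReal ≤
      (‖u + v‖ ^ p.toReal + ‖u - v‖ ^ p.toReal) / 2)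
    (K : ℕ → X →L[ℝ] X) (hK : ABC K) :
    IsMIdeal (compactOperator (RingHom.id ℝ) X (lp (fun _ : ℕ => ℝ) p)) := by
  classical
  open MIdealAux in
  obtain ⟨hcomp, ha, hb, hc⟩ := hK
  -- a uniform bound on the norms of the `K n`
  obtain ⟨B, hB⟩ := hc.bddAbove_range
  have hB' : ∀ n, ‖ContinuousLinearMap.id ℝ X - (2:ℝ) • K n‖ ≤ B := fun n =>
    hB (Set.mem_range_self n)
  have hB0 : (0:ℝ) ≤ B := le_trans (norm_nonneg _) (hB' 0)
  set C : ℝ := (1 + B) / 2 with hCdef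
  have hC0 : (0:ℝ) ≤ C := by rw [hCdef]; linarith
  have hC : ∀ n, ‖K n‖ ≤ C := by
    intro n
    have h2 : (2:ℝ) • K n
        = ContinuousLinearMap.id ℝ X - (ContinuousLinearMap.id ℝ X - (2:ℝ) • K n) := by
      abel
    have h3 : ‖(2:ℝ) • K n‖ ≤ 1 + B := by
      rw [h2]
      calc ‖ContinuousLinearMap.id ℝ X - (ContinuousLinearMap.id ℝ X - (2:ℝ) • K n)‖
          ≤ ‖ContinuousLinearMap.id ℝ X‖ + ‖ContinuousLinearMap.id ℝ X - (2:ℝ) • K n‖ :=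
            norm_sub_le _ _
        _ ≤ 1 + B := add_le_add ContinuousLinearMap.norm_id_le (hB' n)
    have h4 : ‖(2:ℝ) • K n‖ = 2 * ‖K n‖ := by
      have := norm_smul (2:ℝ) (K n)
      simpa using this
    rw [hCdef]
    linarith [h3, h4.symm.trans_le h3]
  -- an ultrafilter refining the product filter
  obtain ⟨𝒰, h𝒰⟩ := Filter.exists_ultrafilter_le ((atTop : Filter ℕ) ×ˢ (atTop : Filter ℕ))
  -- the complement subspace
  set Pm := Pmap hp' K 𝒰 hC0 hC with hPm
  refine ⟨LinearMap.ker (((ContinuousLinearMap.id ℝ (StrongDual ℝ (X →L[ℝ] lp (fun _ : ℕ => ℝ) p)) - Pm : StrongDual ℝ (X →L[ℝ] lp (fun _ : ℕ => ℝ) p) →L[ℝ] StrongDual ℝ (X →L[ℝ] lp (fun _ : ℕ => ℝ) p)) : StrongDual ℝ (X →L[ℝ] lp (fun _ : ℕ => ℝ) p) →ₗ[ℝ] StrongDual ℝ (X →L[ℝ] lp (fun _ : ℕ => ℝ) p))), ?_, ?_, ?_, ?_⟩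
  · exact ContinuousLinearMap.isClosed_ker _
  · -- decomposition
    intro f
    refine ⟨f - Pm f, ?_, Pm f, ?_, by abel⟩
    · intro T hT
      have hTc : IsCompactOperator ⇑T := hT
      have : Pm f T = f T := by
        rw [hPm, Pmap_apply]
        exact Pfun_eq_on_compact hp' K 𝒰 hC0 hC h𝒰 hcomp hb f T hTc
      simp [ContinuousLinearMap.sub_apply, this]
    · rw [LinearMap.mem_ker]
      refine ContinuousLinearMap.ext fun T => ?_
      simp only [ContinuousLinearMap.coe_coe, ContinuousLinearMap.sub_apply, ContinuousLinearMap.id_apply,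
        ContinuousLinearMap.zero_apply]
      rw [sub_eq_zero]
      have hPP : Pm (Pm f) T = Pm f T := by
        rw [hPm]
        simp only [Pmap_apply]
        exact Pfun_idem hp' K 𝒰 hC0 hC h𝒰 hcomp hb f T
      exact hPP.symm
  · -- trivial intersection
    rw [eq_bot_iff]
    intro φ hφ
    rw [Submodule.mem_inf] at hφ
    obtain ⟨h1, h2⟩ := hφ
    have hφc : ∀ S : X →L[ℝ] lp (fun _ : ℕ => ℝ) p, IsCompactOperator ⇑S → φ S = 0 :=
      fun S hS => h1 S hS
    rw [LinearMap.mem_ker] at h2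
    have h2' : Pm φ = φ := by
      have h3 : φ - Pm φ = 0 := by
        calc φ - Pm φ = (ContinuousLinearMap.id ℝ ((X →L[ℝ] lp (fun _ : ℕ => ℝ) p) →L[ℝ] ℝ) - Pm) φ := by
              simp [ContinuousLinearMap.sub_apply]
          _ = 0 := h2
      exact (sub_eq_zero.1 h3).symm
    rw [Submodule.mem_bot]
    refine ContinuousLinearMap.ext fun T => ?_
    rw [ContinuousLinearMap.zero_apply, ← h2', hPm, Pmap_apply]
    exact Pfun_zero_on_annih hp' K 𝒰 hcomp hφc T
  · -- additivity of norms
    intro g hg h hV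
    have hg' : ∀ S : X →L[ℝ] lp (fun _ : ℕ => ℝ) p, IsCompactOperator ⇑S → g S = 0 :=
      fun S hS => hg S hS
    rw [LinearMap.mem_ker] at hV
    have hPh : Pcl hp' K 𝒰 hC h = h := by
      have h3 : h - Pm h = 0 := by
        calc h - Pm h = (ContinuousLinearMap.id ℝ ((X →L[ℝ] lp (fun _ : ℕ => ℝ) p) →L[ℝ] ℝ) - Pm) h := by
              simp [ContinuousLinearMap.sub_apply]
          _ = 0 := hV
      exact (sub_eq_zero.1 h3).symm
    have hPg : Pcl hp' K 𝒰 hC g = 0 := by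
      refine ContinuousLinearMap.ext fun T => ?_
      rw [Pcl_apply, ContinuousLinearMap.zero_apply]
      exact Pfun_zero_on_annih hp' K 𝒰 hcomp hg' T
    have hRg : Rcl hp' K 𝒰 hC g = g := by
      refine ContinuousLinearMap.ext fun U => ?_
      rw [Rcl_apply]
      exact Rfun_eq_on_annih hp' K 𝒰 hcomp hg' U
    have hRh : Rcl hp' K 𝒰 hC h = 0 := by
      have hd := dagger hp' K 𝒰 hC h𝒰 hClark hc h
      rw [hPh] at hd
      have hle : ‖Rcl hp' K 𝒰 hC h‖ ≤ 0 := by linarith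
      refine ContinuousLinearMap.ext fun U => ?_
      rw [ContinuousLinearMap.zero_apply]
      have h1 : ‖Rcl hp' K 𝒰 hC h U‖ ≤ ‖Rcl hp' K 𝒰 hC h‖ * ‖U‖ :=
        (Rcl hp' K 𝒰 hC h).le_opNorm U
      have h2 : ‖Rcl hp' K 𝒰 hC h U‖ ≤ 0 := by nlinarith [norm_nonneg U]
      exact norm_le_zero_iff.1 h2
    refine le_antisymm (norm_add_le _ _) ?_
    have hd := dagger hp' K 𝒰 hC h𝒰 hClark hc (g + h)
    have hPsum : Pcl hp' K 𝒰 hC (g + h) = h := by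
      have : Pm (g + h) = Pm g + Pm h := map_add Pm g h
      have hPmg : Pm g = Pcl hp' K 𝒰 hC g := rfl
      have hPmh : Pm h = Pcl hp' K 𝒰 hC h := rfl
      have hPmgh : Pm (g + h) = Pcl hp' K 𝒰 hC (g + h) := rfl
      rw [← hPmgh, this, hPmg, hPmh, hPg, hPh, zero_add]
    have hRsum : Rcl hp' K 𝒰 hC (g + h) = g := by
      set Rm := Rmap hp' K 𝒰 hC0 hC with hRm
      have : Rm (g + h) = Rm g + Rm h := map_add Rm g h
      have hRmg : Rm g = Rcl hp' K 𝒰 hC g := rfl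
      have hRmh : Rm h = Rcl hp' K 𝒰 hC h := rfl
      have hRmgh : Rm (g + h) = Rcl hp' K 𝒰 hC (g + h) := rfl
      rw [← hRmgh, this, hRmg, hRmh, hRg, hRh, add_zero]
    rw [hPsum, hRsum] at hd
    linarith
end
end

section
/- Let 1 < p < ∞, 1/p + 1/p' = 1, and let Y be a Banach space such that inequality (6) holds for Y* and p': limsup_n (‖y*‖^{p'} + ‖y*_n‖^{p'})^{1/p'} ≤ limsup_n ((‖y* + y*_n‖^{p'} + ‖y* − y*_n‖^{p'})/2)^{1/p'} for all y* ∈ Y* and all weak* null sequences (y*_n) in Y*. Then every contraction T: ℓ_p → Y has the p'-averaged property (M*): limsup_n ‖x* + T* y*_n‖ ≤ limsup_n ((‖y* + y*_n‖^{p'} + ‖y* − y*_n‖^{p'})/2)^{1/p'} whenever x* ∈ (ℓ_p)*, y* ∈ Y* with ‖x*‖ ≤ ‖y*‖ and (y*_n) is weak* null in Y*. -/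
/-! Write `a k = g (e k)`. Testing `g` on the vectors attaining equality in Hölder's
inequality gives `∑ |a k| ^ q ≤ ‖g‖ ^ q`, so up to `ε` the functional `g` lives on a finite
set `s` of coordinates. Split `x = P x + (x - P x)` with `P` the truncation to `s`. Since
`‖P x‖ ^ p + ‖x - P x‖ ^ p = ‖x‖ ^ p`, Hölder's inequality for two terms bounds
`g (P x) + y*ₙ (T (x - P x))` by `(‖g‖ ^ q + ‖y*ₙ‖ ^ q) ^ (1 / q) * ‖x‖`; the cross terms are
`g (x - P x)`, at most `ε ‖x‖`, and `y*ₙ (T (P x))`, uniformly small on the unit ball because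
`s` is finite and `y*ₙ` is weak* null. Hence
`limsup ‖g + T* y*ₙ‖ ≤ limsup (‖y*‖ ^ q + ‖y*ₙ‖ ^ q) ^ (1 / q)`, and inequality (6) concludes. -/

open Filter Topology NormedSpace ENNReal MeasureTheory

noncomputable section

/-- A sequence in the dual of `Y` is weak* null if `fs n y → 0` for every `y ∈ Y`. -/
def WeakStarNull {Y : Type*} [NormedAddCommGroup Y] [NormedSpace ℝ Y]
    (fs : ℕ → StrongDual ℝ Y) : Prop :=
  ∀ y : Y, Tendsto (fun n => fs n y) atTop (𝓝 0)

lemma mul_add_mul_le_Lp_mul_Lq {p q : ℝ} (hpq : p.HolderConjugate q) {a b s t : ℝ}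
    (ha : 0 ≤ a) (hb : 0 ≤ b) (hs : 0 ≤ s) (ht : 0 ≤ t) :
    a * s + b * t ≤ (a ^ q + b ^ q) ^ (1 / q) * (s ^ p + t ^ p) ^ (1 / p) := by
  simpa [Fin.sum_univ_two, abs_of_nonneg, ha, hb, hs, ht] using
    Real.inner_le_Lp_mul_Lq (Finset.univ : Finset (Fin 2)) ![a, b] ![s, t] hpq.symm

lemma le_rpow_of_le_mul_rpow {p q : ℝ} (hpq : p.HolderConjugate q) {s c : ℝ}
    (hs : 0 ≤ s) (hc : 0 ≤ c) (h : s ≤ c * s ^ (1 / p)) : s ≤ c ^ q := by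
  rcases hs.eq_or_lt with rfl | hs
  · exact Real.rpow_nonneg hc q
  have hsplit : s ^ (1 / p) * s ^ (1 / q) = s := by
    rw [← Real.rpow_add hs, one_div, one_div, hpq.inv_add_inv_eq_one, Real.rpow_one]
  have hsc : s ^ (1 / q) ≤ c := by
    refine le_of_mul_le_mul_left ?_ (Real.rpow_pos_of_pos hs (1 / p))
    rw [hsplit, mul_comm]
    exact h
  calc s = (s ^ (1 / q)) ^ q := by rw [one_div, Real.rpow_inv_rpow hs.le hpq.symm.ne_zero]
    _ ≤ c ^ q := Real.rpow_le_rpow (Real.rpow_nonneg hs.le _) hsc hpq.symm.nonneg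

section lp

variable {ι : Type*} [DecidableEq ι] {p : ℝ≥0∞}

def lpTruncate (s : Finset ι) (x : lp (fun _ : ι => ℝ) p) : lp (fun _ : ι => ℝ) p :=
  ∑ k ∈ s, lp.single p k (x k)

lemma norm_lpTruncate_rpow_add (hp : 0 < p.toReal) (s : Finset ι) (x : lp (fun _ : ι => ℝ) p) :
    ‖lpTruncate s x‖ ^ p.toReal + ‖x - lpTruncate s x‖ ^ p.toReal = ‖x‖ ^ p.toReal := by
  rw [lpTruncate, lp.norm_sum_single hp, lp.norm_compl_sum_single hp]
  ring

variable [Fact (1 ≤ p)]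

lemma apply_sum_single (φ : StrongDual ℝ (lp (fun _ : ι => ℝ) p)) (c : ι → ℝ)
    (s : Finset ι) :
    φ (∑ k ∈ s, lp.single p k (c k)) = ∑ k ∈ s, c k * φ (lp.single p k 1) := by
  rw [map_sum]
  refine Finset.sum_congr rfl fun k _ => ?_
  rw [← smul_eq_mul, ← map_smul, ← lp.single_smul, smul_eq_mul, mul_one]

lemma abs_apply_lpTruncate_le_sum (φ : StrongDual ℝ (lp (fun _ : ι => ℝ) p)) (s : Finset ι)
    (x : lp (fun _ : ι => ℝ) p) :
    |φ (lpTruncate s x)| ≤ (∑ k ∈ s, |φ (lp.single p k 1)|) * ‖x‖ := by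
  have hp : p ≠ 0 := (zero_lt_one.trans_le Fact.out).ne'
  rw [lpTruncate, apply_sum_single, Finset.sum_mul]
  refine (Finset.abs_sum_le_sum_abs _ _).trans (Finset.sum_le_sum fun k _ => ?_)
  rw [abs_mul, mul_comm]
  exact mul_le_mul_of_nonneg_left (lp.norm_apply_le_norm hp x k) (abs_nonneg _)

lemma sum_abs_apply_single_rpow_le {q : ℝ} (hpq : p.toReal.HolderConjugate q)
    (φ : StrongDual ℝ (lp (fun _ : ι => ℝ) p)) (s : Finset ι) :
    ∑ k ∈ s, |φ (lp.single p k 1)| ^ q ≤ ‖φ‖ ^ q := by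
  set a : ι → ℝ := fun k => φ (lp.single p k 1)
  -- the vector attaining equality in Hölder's inequality against `a` on `s`
  set u : lp (fun _ : ι => ℝ) p :=
    ∑ k ∈ s, lp.single p k (SignType.sign (a k) * |a k| ^ (q - 1))
  have hφu : φ u = ∑ k ∈ s, |a k| ^ q := by
    rw [apply_sum_single]
    refine Finset.sum_congr rfl fun k _ => ?_
    rw [mul_right_comm, sign_mul_self, mul_comm,
      ← Real.rpow_add_one' (abs_nonneg _) (by linarith [hpq.symm.pos]), sub_add_cancel]
  have hu : ‖u‖ ^ p.toReal ≤ ∑ k ∈ s, |a k| ^ q := by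
    rw [lp.norm_sum_single hpq.pos]
    refine Finset.sum_le_sum fun k _ => ?_
    calc ‖(SignType.sign (a k) : ℝ) * |a k| ^ (q - 1)‖ ^ p.toReal
        ≤ (|a k| ^ (q - 1)) ^ p.toReal := by
          gcongr
          rw [Real.norm_eq_abs, abs_mul, abs_of_nonneg (Real.rpow_nonneg (abs_nonneg _) _)]
          refine mul_le_of_le_one_left (Real.rpow_nonneg (abs_nonneg _) _) ?_
          rcases lt_trichotomy (a k) 0 with h | h | h <;> simp [h]
      _ = |a k| ^ q := by rw [← Real.rpow_mul (abs_nonneg _), hpq.symm.sub_one_mul_conj]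
  refine le_rpow_of_le_mul_rpow hpq (Finset.sum_nonneg fun k _ =>
    Real.rpow_nonneg (abs_nonneg _) _) (norm_nonneg φ) ?_
  calc ∑ k ∈ s, |a k| ^ q = φ u := hφu.symm
    _ ≤ ‖φ‖ * ‖u‖ := (le_abs_self _).trans (φ.le_opNorm u)
    _ ≤ ‖φ‖ * (∑ k ∈ s, |a k| ^ q) ^ (1 / p.toReal) := by
      gcongr
      calc ‖u‖ = (‖u‖ ^ p.toReal) ^ (1 / p.toReal) := by
            rw [one_div, Real.rpow_rpow_inv (norm_nonneg _) hpq.ne_zero]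
        _ ≤ _ := by gcongr

lemma summable_abs_apply_single_rpow {q : ℝ} (hpq : p.toReal.HolderConjugate q)
    (φ : StrongDual ℝ (lp (fun _ : ι => ℝ) p)) :
    Summable fun k => |φ (lp.single p k 1)| ^ q :=
  summable_of_sum_le (fun _ => Real.rpow_nonneg (abs_nonneg _) _)
    (sum_abs_apply_single_rpow_le hpq φ)

lemma abs_apply_lpTruncate_le {q : ℝ} (hpq : p.toReal.HolderConjugate q)
    (φ : StrongDual ℝ (lp (fun _ : ι => ℝ) p)) (s : Finset ι)
    (x : lp (fun _ : ι => ℝ) p) :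
    |φ (lpTruncate s x)| ≤ (∑ k ∈ s, |φ (lp.single p k 1)| ^ q) ^ (1 / q) * ‖x‖ := by
  rw [lpTruncate, apply_sum_single]
  calc |∑ k ∈ s, x k * φ (lp.single p k 1)|
      ≤ ∑ k ∈ s, |φ (lp.single p k 1)| * |x k| := by
        refine (Finset.abs_sum_le_sum_abs _ _).trans_eq (Finset.sum_congr rfl fun k _ => ?_)
        rw [abs_mul, mul_comm]
    _ ≤ (∑ k ∈ s, |φ (lp.single p k 1)| ^ q) ^ (1 / q) *
        (∑ k ∈ s, |x k| ^ p.toReal) ^ (1 / p.toReal) := by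
        simpa only [abs_abs] using Real.inner_le_Lp_mul_Lq s (fun k => |φ (lp.single p k 1)|)
          (fun k => |x k|) hpq.symm
    _ ≤ (∑ k ∈ s, |φ (lp.single p k 1)| ^ q) ^ (1 / q) * ‖x‖ := by
        gcongr
        calc (∑ k ∈ s, |x k| ^ p.toReal) ^ (1 / p.toReal)
            ≤ (‖x‖ ^ p.toReal) ^ (1 / p.toReal) := by
              gcongr
              exact lp.sum_rpow_le_norm_rpow hpq.pos x s
          _ = ‖x‖ := by rw [one_div, Real.rpow_rpow_inv (norm_nonneg _) hpq.ne_zero]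

lemma exists_abs_apply_sub_lpTruncate_le {q : ℝ} (hpq : p.toReal.HolderConjugate q)
    (φ : StrongDual ℝ (lp (fun _ : ι => ℝ) p)) {ε : ℝ} (hε : 0 < ε) :
    ∃ s : Finset ι, ∀ x, |φ (x - lpTruncate s x)| ≤ ε * ‖x‖ := by
  have hp : p ≠ ⊤ := fun h => by simpa [h] using hpq.pos
  obtain ⟨s, hs⟩ := summable_iff_vanishing.1 (summable_abs_apply_single_rpow hpq φ)
    (Set.Iio (ε ^ q)) (Iio_mem_nhds (Real.rpow_pos_of_pos hε q))
  refine ⟨s, fun x => ?_⟩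
  have hlim : Tendsto (fun t => |φ (lpTruncate t x - lpTruncate s x)|) atTop
      (𝓝 |φ (x - lpTruncate s x)|) :=
    ((φ.continuous.tendsto _).comp ((lp.hasSum_single hp x).sub_const _)).abs
  refine le_of_tendsto hlim ?_
  filter_upwards [eventually_ge_atTop s] with t hst
  rw [lpTruncate, lpTruncate, ← Finset.sum_sdiff_eq_sub hst]
  refine (abs_apply_lpTruncate_le hpq φ (t \ s) x).trans ?_
  gcongr
  calc (∑ k ∈ t \ s, |φ (lp.single p k 1)| ^ q) ^ (1 / q) ≤ (ε ^ q) ^ (1 / q) :=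
        Real.rpow_le_rpow (Finset.sum_nonneg fun _ _ => Real.rpow_nonneg (abs_nonneg _) _)
          (hs _ Finset.sdiff_disjoint).le (one_div_nonneg.2 hpq.symm.nonneg)
    _ = ε := by rw [one_div, Real.rpow_rpow_inv hε.le hpq.symm.ne_zero]

lemma norm_add_le_of_lpTruncate {q : ℝ} (hpq : p.toReal.HolderConjugate q)
    (g h : StrongDual ℝ (lp (fun _ : ι => ℝ) p)) (s : Finset ι) {ε δ : ℝ} (hε : 0 ≤ ε)
    (hδ : 0 ≤ δ) (hg : ∀ x, |g (x - lpTruncate s x)| ≤ ε * ‖x‖)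
    (hh : ∀ x, |h (lpTruncate s x)| ≤ δ * ‖x‖) :
    ‖g + h‖ ≤ (‖g‖ ^ q + ‖h‖ ^ q) ^ (1 / q) + ε + δ := by
  refine ContinuousLinearMap.opNorm_le_bound _ (by positivity) fun x => ?_
  set P := lpTruncate s x
  have hmain : |g P| + |h (x - P)| ≤ (‖g‖ ^ q + ‖h‖ ^ q) ^ (1 / q) * ‖x‖ :=
    calc |g P| + |h (x - P)| ≤ ‖g‖ * ‖P‖ + ‖h‖ * ‖x - P‖ :=
          add_le_add (g.le_opNorm P) (h.le_opNorm _)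
      _ ≤ (‖g‖ ^ q + ‖h‖ ^ q) ^ (1 / q) *
            (‖P‖ ^ p.toReal + ‖x - P‖ ^ p.toReal) ^ (1 / p.toReal) :=
          mul_add_mul_le_Lp_mul_Lq hpq (norm_nonneg _) (norm_nonneg _) (norm_nonneg _)
            (norm_nonneg _)
      _ = (‖g‖ ^ q + ‖h‖ ^ q) ^ (1 / q) * ‖x‖ := by
          rw [norm_lpTruncate_rpow_add hpq.pos, one_div p.toReal,
            Real.rpow_rpow_inv (norm_nonneg _) hpq.ne_zero]
  calc ‖(g + h) x‖ = |(g P + h (x - P)) + (g (x - P) + h P)| := by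
        rw [Real.norm_eq_abs, add_apply, map_sub, map_sub]
        ring_nf
    _ ≤ (|g P| + |h (x - P)|) + (|g (x - P)| + |h P|) :=
        (abs_add_le _ _).trans (add_le_add (abs_add_le _ _) (abs_add_le _ _))
    _ ≤ (‖g‖ ^ q + ‖h‖ ^ q) ^ (1 / q) * ‖x‖ + (ε * ‖x‖ + δ * ‖x‖) :=
        add_le_add hmain (add_le_add (hg x) (hh x))
    _ = ((‖g‖ ^ q + ‖h‖ ^ q) ^ (1 / q) + ε + δ) * ‖x‖ := by ring

end lp

lemma WeakStarNull.exists_norm_le {Y : Type*} [NormedAddCommGroup Y] [NormedSpace ℝ Y]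
    [CompleteSpace Y] {fs : ℕ → StrongDual ℝ Y} (hfs : WeakStarNull fs) :
    ∃ C, ∀ n, ‖fs n‖ ≤ C :=
  banach_steinhaus fun y => ((hfs y).norm.bddAbove_range).imp fun _ hC n =>
    hC (Set.mem_range_self n)

lemma limsup_le_limsup_of_forall_eventually_le_add {α : Type*} {F : Filter α} [F.NeBot]
    {u w : α → ℝ} (hu : IsCoboundedUnder (· ≤ ·) F u) (hw : IsBoundedUnder (· ≤ ·) F w)
    (hw' : IsCoboundedUnder (· ≤ ·) F w) (h : ∀ ε > 0, ∀ᶠ n in F, u n ≤ w n + ε) :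
    limsup u F ≤ limsup w F := by
  refine le_of_forall_pos_le_add fun ε hε => ?_
  rw [← limsup_add_const F w ε hw hw']
  exact limsup_le_limsup (h ε hε) hu (isBoundedUnder_le_add hw isBoundedUnder_const)

/-- If inequality (6) holds for `Y*` and the conjugate exponent `p'`, then every contraction
`T : ℓ_p → Y` has the `p'`-averaged property (M*). -/
theorem pAveraged_Mstar_of_ineq6
    (p : ℝ≥0∞) [Fact (1 ≤ p)] (hp : 1 < p) (hp' : p ≠ ∞)
    (q : ℝ) (hq : 1 / p.toReal + 1 / q = 1)
    (Y : Type*) [NormedAddCommGroup Y] [NormedSpace ℝ Y] [CompleteSpace Y]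
    (h6 : ∀ (f : StrongDual ℝ Y) (fs : ℕ → StrongDual ℝ Y), WeakStarNull fs →
      limsup (fun n => (‖f‖ ^ q + ‖fs n‖ ^ q) ^ (1 / q)) atTop ≤
      limsup (fun n => ((‖f + fs n‖ ^ q + ‖f - fs n‖ ^ q) / 2) ^ (1 / q)) atTop)
    (T : lp (fun _ : ℕ => ℝ) p →L[ℝ] Y) (hT : ‖T‖ ≤ 1) :
    ∀ (g : StrongDual ℝ (lp (fun _ : ℕ => ℝ) p)) (f : StrongDual ℝ Y)
      (fs : ℕ → StrongDual ℝ Y), ‖g‖ ≤ ‖f‖ → WeakStarNull fs →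
      limsup (fun n => ‖g + (fs n).comp T‖) atTop ≤
      limsup (fun n => ((‖f + fs n‖ ^ q + ‖f - fs n‖ ^ q) / 2) ^ (1 / q)) atTop := by
  intro g f fs hgf hfs
  have hpq : p.toReal.HolderConjugate q := by
    refine Real.holderConjugate_iff.2 ⟨?_, by simpa only [one_div] using hq⟩
    simpa using ENNReal.toReal_strict_mono hp' hp
  have hq_pos : 0 < q := hpq.symm.pos
  obtain ⟨C, hC⟩ := hfs.exists_norm_le
  have hbdd : IsBoundedUnder (· ≤ ·) atTop fun n => (‖f‖ ^ q + ‖fs n‖ ^ q) ^ (1 / q) :=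
    isBoundedUnder_of ⟨(‖f‖ ^ q + C ^ q) ^ (1 / q), fun n => by gcongr; exact hC n⟩
  refine (limsup_le_limsup_of_forall_eventually_le_add
    (isCoboundedUnder_le_of_le atTop fun n => norm_nonneg _) hbdd
    (isCoboundedUnder_le_of_le atTop fun n => by positivity) fun ε hε => ?_).trans
    (h6 f fs hfs)
  obtain ⟨s, hs⟩ := exists_abs_apply_sub_lpTruncate_le hpq g (half_pos hε)
  have hhead : Tendsto (fun n => ∑ k ∈ s, |(fs n).comp T (lp.single p k 1)|) atTop (𝓝 0) := by
    simpa using tendsto_finsetSum s fun k _ => (hfs (T (lp.single p k 1))).abs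
  filter_upwards [hhead.eventually_lt_const (half_pos hε)] with n hn
  have hcomp : ‖(fs n).comp T‖ ≤ ‖fs n‖ :=
    (ContinuousLinearMap.opNorm_comp_le _ _).trans (mul_le_of_le_one_right (norm_nonneg _) hT)
  calc ‖g + (fs n).comp T‖ ≤ (‖g‖ ^ q + ‖(fs n).comp T‖ ^ q) ^ (1 / q) + ε / 2 +
        ∑ k ∈ s, |(fs n).comp T (lp.single p k 1)| :=
        norm_add_le_of_lpTruncate hpq g _ s (half_pos hε).le
          (Finset.sum_nonneg fun _ _ => abs_nonneg _) hs (abs_apply_lpTruncate_le_sum _ s)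
    _ ≤ (‖f‖ ^ q + ‖fs n‖ ^ q) ^ (1 / q) + ε := by
        have : (‖g‖ ^ q + ‖(fs n).comp T‖ ^ q) ^ (1 / q) ≤
            (‖f‖ ^ q + ‖fs n‖ ^ q) ^ (1 / q) := by
          gcongr
        linarith
end
end
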